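/- arXiv:2512.17723 — 8 statements merged into one kernel-verified Lean document; each statement's English description precedes it below -/
import Mathlib

section
/- Let z be a point in the open unit disc and λ a point on the unit circle. Then the supremum over ζ on the unit circle of |ζ - λ|/|ζ - z| equals 2|λ - z|/(1 - |z|²). -/
/-!
For `‖ζ‖ = 1` one has `‖1 - z̄ ζ‖ = ‖ζ - z‖`, so the polynomial identity
`(1 - ‖z‖²) (ζ - λ) = (ζ - z) (1 - z̄ λ) - (λ - z) (1 - z̄ ζ)` and the triangle inequality give
`(1 - ‖z‖²) ‖ζ - λ‖ ≤ 2 ‖ζ - z‖ ‖λ - z‖` on the circle. Equality holds when the two terms are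
antiparallel, i.e. when `φ ζ = -φ λ` for the disc automorphism `φ ζ = (ζ - z) / (1 - z̄ ζ)`;
solving gives `ζ = -λ D̄ / D` with `D = 1 + ‖z‖² - 2 z̄ λ`.
-/

open ComplexConjugate

namespace Complex

theorem norm_one_sub_conj_mul_eq_norm_sub {ζ : ℂ} (hζ : ‖ζ‖ = 1) (z : ℂ) :
    ‖1 - conj z * ζ‖ = ‖ζ - z‖ := by
  have h : 1 - conj z * ζ = ζ * conj (ζ - z) := by
    rw [map_sub, mul_sub, mul_conj', hζ, ofReal_one]
    ring
  rw [h, norm_mul, norm_conj, hζ, one_mul]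

theorem one_sub_norm_sq_mul_sub_eq (z ζ w : ℂ) :
    ((1 - ‖z‖ ^ 2 : ℝ) : ℂ) * (ζ - w) =
      (ζ - z) * (1 - conj z * w) - (w - z) * (1 - conj z * ζ) := by
  push_cast
  rw [← conj_mul']
  ring

theorem one_sub_norm_sq_mul_norm_sub_le {ζ w : ℂ} (hζ : ‖ζ‖ = 1) (hw : ‖w‖ = 1) (z : ℂ) :
    (1 - ‖z‖ ^ 2) * ‖ζ - w‖ ≤ 2 * (‖ζ - z‖ * ‖w - z‖) :=
  calc (1 - ‖z‖ ^ 2) * ‖ζ - w‖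
      ≤ ‖((1 - ‖z‖ ^ 2 : ℝ) : ℂ) * (ζ - w)‖ := by
        rw [norm_mul, norm_real, Real.norm_eq_abs]
        exact mul_le_mul_of_nonneg_right (le_abs_self _) (norm_nonneg _)
    _ = ‖(ζ - z) * (1 - conj z * w) - (w - z) * (1 - conj z * ζ)‖ := by
        rw [one_sub_norm_sq_mul_sub_eq]
    _ ≤ ‖(ζ - z) * (1 - conj z * w)‖ + ‖(w - z) * (1 - conj z * ζ)‖ := norm_sub_le _ _
    _ = 2 * (‖ζ - z‖ * ‖w - z‖) := by
        rw [norm_mul, norm_mul, norm_one_sub_conj_mul_eq_norm_sub hζ,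
          norm_one_sub_conj_mul_eq_norm_sub hw]
        ring

theorem exists_norm_eq_one_one_sub_norm_sq_mul_norm_sub_eq {z w : ℂ} (hz : ‖z‖ < 1)
    (hw : ‖w‖ = 1) :
    ∃ ζ : ℂ, ‖ζ‖ = 1 ∧ (1 - ‖z‖ ^ 2) * ‖ζ - w‖ = 2 * (‖ζ - z‖ * ‖w - z‖) := by
  set D : ℂ := ((1 + ‖z‖ ^ 2 : ℝ) : ℂ) - 2 * conj z * w with hD_def
  have hD : D ≠ 0 := by
    intro h
    have : 1 + ‖z‖ ^ 2 = 2 * ‖z‖ := by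
      have := congrArg norm (sub_eq_zero.mp h)
      rwa [norm_real, Real.norm_of_nonneg (by positivity), norm_mul, norm_mul, norm_conj, hw,
        Complex.norm_two, mul_one] at this
    nlinarith
  set ζ := -w * conj D / D
  have hζ : ‖ζ‖ = 1 := by
    rw [norm_div, norm_mul, norm_neg, norm_conj, hw, one_mul, div_self (norm_ne_zero_iff.mpr hD)]
  have hζD : ζ * D = -w * conj D := div_mul_cancel₀ _ hD
  have hww : conj w * w = 1 := by rw [conj_mul', hw]; norm_num
  have hzz : conj z * z = ‖z‖ ^ 2 := conj_mul' z
  have hantiparallel :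
      ((1 - ‖z‖ ^ 2 : ℝ) : ℂ) * (ζ - w) = 2 * ((ζ - z) * (1 - conj z * w)) := by
    simp only [hD_def, map_sub, map_mul, conj_ofReal, map_ofNat, conj_conj] at hζD
    push_cast at hζD ⊢
    linear_combination -hζD - 2 * w * hzz - 2 * z * hww
  refine ⟨ζ, hζ, ?_⟩
  have := congrArg norm hantiparallel
  rwa [norm_mul, norm_real, Real.norm_of_nonneg (by nlinarith [norm_nonneg z]), norm_mul,
    norm_mul, Complex.norm_two, norm_one_sub_conj_mul_eq_norm_sub hw] at this

end Complex

/-- For z in the open unit disc and λ on the unit circle, the supremum over ζ on the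
unit circle of |ζ - λ|/|ζ - z| equals 2|λ - z|/(1 - |z|²). -/
theorem stmt0 (z lam : ℂ) (hz : ‖z‖ < 1) (hlam : ‖lam‖ = 1) :
    sSup {x : ℝ | ∃ ζ : ℂ, ‖ζ‖ = 1 ∧ x = ‖ζ - lam‖ / ‖ζ - z‖} =
      2 * ‖lam - z‖ / (1 - ‖z‖ ^ 2) := by
  have hdisc : 0 < 1 - ‖z‖ ^ 2 := by nlinarith [norm_nonneg z]
  have hdist : ∀ ζ : ℂ, ‖ζ‖ = 1 → 0 < ‖ζ - z‖ := fun ζ hζ ↦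
    norm_pos_iff.mpr (sub_ne_zero.mpr (by rintro rfl; linarith))
  refine IsGreatest.csSup_eq ⟨?_, ?_⟩
  · obtain ⟨ζ, hζ, heq⟩ := Complex.exists_norm_eq_one_one_sub_norm_sq_mul_norm_sub_eq hz hlam
    refine ⟨ζ, hζ, ?_⟩
    rw [div_eq_div_iff hdisc.ne' (hdist ζ hζ).ne']
    linarith
  · rintro _ ⟨ζ, hζ, rfl⟩
    rw [div_le_div_iff₀ (hdist ζ hζ) hdisc]
    linarith [Complex.one_sub_norm_sq_mul_norm_sub_le hζ hlam z]
end

section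
/- Let H be a reproducing kernel Hilbert space on a set X with kernel K normalized at a point z₀ (i.e., K(z, z₀) = 1 for all z ∈ X). Let z₁, …, z_n ∈ X be distinct, let L = [K(z_i, z_j)] be the Gram matrix, and let 𝟙 be the all-ones vector. Set γ = sup{|f(z₀)| : f ∈ H, f(z_k) = 0 for 1 ≤ k ≤ n, ‖f‖ ≤ 1}. If M is any n×n matrix with LML = L, then γ² = 1 - ⟨M𝟙, 𝟙⟩. -/
/-!
Let `V` be the span of the kernel functions `k zᵢ` and `p` the orthogonal projection of `k z₀`
onto `V`. A function vanishes at every `zᵢ` iff it is orthogonal to `V`, and for such `f`,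
`f z₀ = ⟪k z₀, f⟫ = ⟪k z₀ - p, f⟫`; hence `γ = ‖k z₀ - p‖`, and by Pythagoras
`γ² = ‖k z₀‖² - ‖p‖² = 1 - ‖p‖²`. Writing `p = ∑ cᵢ • k zᵢ`, the normal equations read `L c = 𝟙`
because `K(z_j, z₀) = 1`, so `𝟙* M 𝟙 = c* (L M L) c = c* L c = ‖p‖²`.
-/

open scoped InnerProductSpace Matrix
open Submodule Matrix

section

variable {𝕜 E ι : Type*} [RCLike 𝕜] [NormedAddCommGroup E] [InnerProductSpace 𝕜 E]

theorem Submodule.mem_orthogonal_span_range_iff {v : ι → E} {f : E} :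
    f ∈ (span 𝕜 (Set.range v))ᗮ ↔ ∀ i, ⟪v i, f⟫_𝕜 = 0 := by
  rw [← span_singleton_le_iff_mem, ← isOrtho_iff_le, isOrtho_comm, isOrtho_span]
  simp

theorem Submodule.isGreatest_norm_inner_orthogonal (K : Submodule 𝕜 E) [K.HasOrthogonalProjection]
    (x : E) :
    IsGreatest {r : ℝ | ∃ f ∈ Kᗮ, ‖f‖ ≤ 1 ∧ r = ‖⟪x, f⟫_𝕜‖} ‖x - K.starProjection x‖ := by
  set d := x - K.starProjection x
  have hd : d ∈ Kᗮ := K.sub_starProjection_mem_orthogonal x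
  have inner_eq : ∀ f ∈ Kᗮ, ⟪x, f⟫_𝕜 = ⟪d, f⟫_𝕜 := fun f hf => by
    rw [inner_sub_left, inner_right_of_mem_orthogonal (K.starProjection_apply_mem x) hf, sub_zero]
  refine ⟨⟨(‖d‖ : 𝕜)⁻¹ • d, K.orthogonal.smul_mem _ hd, ?_, ?_⟩, ?_⟩
  · rw [norm_smul, norm_inv, RCLike.norm_ofReal, abs_norm]
    exact inv_mul_le_one_of_le₀ le_rfl (norm_nonneg d)
  · rw [inner_eq _ (K.orthogonal.smul_mem _ hd), inner_smul_right, inner_self_eq_norm_sq_to_K,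
      norm_mul, norm_inv, ← RCLike.ofReal_pow]
    simp only [RCLike.norm_ofReal, abs_norm, abs_pow]
    rcases eq_or_ne ‖d‖ 0 with h | h
    · simp [h]
    · field_simp
  · rintro r ⟨f, hf, hf1, rfl⟩
    rw [inner_eq f hf]
    exact (norm_inner_le_norm d f).trans (mul_le_of_le_one_right (norm_nonneg d) hf1)

theorem Submodule.norm_sub_starProjection_sq (K : Submodule 𝕜 E) [K.HasOrthogonalProjection]
    (x : E) : ‖x - K.starProjection x‖ ^ 2 = ‖x‖ ^ 2 - ‖K.starProjection x‖ ^ 2 := by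
  rw [norm_sq_eq_add_norm_sq_starProjection x K, starProjection_orthogonal_val]
  ring

theorem Matrix.gram_mulVec_eq_inner_of_sum_smul_eq_starProjection [Fintype ι]
    (K : Submodule 𝕜 E) [K.HasOrthogonalProjection] {v : ι → E} (hv : ∀ i, v i ∈ K)
    {c : ι → 𝕜} {x : E} (hc : ∑ i, c i • v i = K.starProjection x) :
    gram 𝕜 v *ᵥ c = fun j => ⟪v j, x⟫_𝕜 := by
  funext j
  calc (gram 𝕜 v *ᵥ c) j = ⟪v j, ∑ i, c i • v i⟫_𝕜 := by
        simp [mulVec, dotProduct, inner_sum, inner_smul_right, mul_comm]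
    _ = ⟪v j, x⟫_𝕜 := by
        rw [hc, ← inner_starProjection_left_eq_right, starProjection_eq_self_iff.mpr (hv j)]

end

theorem Matrix.IsHermitian.star_mulVec_dotProduct_mulVec_of_mul_mul_eq_self {n R : Type*}
    [Fintype n] [CommRing R] [StarRing R] {G M : Matrix n n R} (hG : G.IsHermitian)
    (hM : G * M * G = G) (c : n → R) :
    star (G *ᵥ c) ⬝ᵥ M *ᵥ (G *ᵥ c) = star c ⬝ᵥ G *ᵥ c := by
  rw [star_mulVec, hG.eq, mulVec_mulVec, ← dotProduct_mulVec, mulVec_mulVec, ← mul_assoc, hM]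

theorem stmt3_general {X : Type*} {H : Type*} [NormedAddCommGroup H] [InnerProductSpace ℂ H]
    (ev : H →ₗ[ℂ] (X → ℂ)) (k : X → H)
    (hrep : ∀ (f : H) (z : X), ev f z = ⟪k z, f⟫_ℂ)
    (K : X → X → ℂ) (hK : ∀ z w, K z w = ev (k w) z)
    (z0 : X) (hnorm : ∀ z, K z z0 = 1)
    {n : ℕ} (zs : Fin n → X)
    (L M : Matrix (Fin n) (Fin n) ℂ) (hL : ∀ i j, L i j = K (zs i) (zs j))
    (hM : L * M * L = L)
    (γ : ℝ)
    (hγ : γ = sSup {x : ℝ | ∃ f : H, (∀ i, ev f (zs i) = 0) ∧ ‖f‖ ≤ 1 ∧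
      x = ‖ev f z0‖}) :
    ((γ : ℂ)) ^ 2 = 1 - ∑ i, ∑ j, M i j := by
  have hkernel : ∀ z w, K z w = ⟪k z, k w⟫_ℂ := fun z w => by rw [hK, hrep]
  set V := span ℂ (Set.range fun i => k (zs i))
  have hkV : ∀ i, k (zs i) ∈ V := fun i => subset_span ⟨i, rfl⟩
  have : FiniteDimensional ℂ V := FiniteDimensional.span_of_finite ℂ (Set.finite_range _)
  obtain ⟨c, hc⟩ := (mem_span_range_iff_exists_fun ℂ).mp (V.starProjection_apply_mem (k z0))
  set p := V.starProjection (k z0)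
  have hLgram : L = gram ℂ fun i => k (zs i) := Matrix.ext fun i j => by rw [hL, hkernel]; rfl
  have hLc : L *ᵥ c = 1 := by
    rw [hLgram, gram_mulVec_eq_inner_of_sum_smul_eq_starProjection V hkV hc]
    exact funext fun j => (hkernel _ _).symm.trans (hnorm _)
  have hγd : γ = ‖k z0 - p‖ := by
    rw [hγ, ← (V.isGreatest_norm_inner_orthogonal (k z0)).csSup_eq]
    simp_rw [V, mem_orthogonal_span_range_iff, hrep]
  have hsum : ∑ i, ∑ j, M i j = ⟪p, p⟫_ℂ := by
    calc ∑ i, ∑ j, M i j = star (L *ᵥ c) ⬝ᵥ M *ᵥ (L *ᵥ c) := by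
          rw [hLc]; simp [dotProduct, mulVec]
      _ = star c ⬝ᵥ L *ᵥ c :=
          (hLgram ▸ isHermitian_gram ℂ _).star_mulVec_dotProduct_mulVec_of_mul_mul_eq_self hM c
      _ = ⟪p, p⟫_ℂ := by rw [hLgram, star_dotProduct_gram_mulVec, hc]
  have hk1 : ‖k z0‖ ^ 2 = 1 := by
    rw [← inner_self_eq_norm_sq (𝕜 := ℂ), ← hkernel, hnorm, RCLike.one_re]
  rw [hγd, hsum, inner_self_eq_norm_sq_to_K, ← Complex.ofReal_pow, V.norm_sub_starProjection_sq,
    hk1]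
  push_cast
  rfl

/-- Gramian formula for the extremal value of the problem of vanishing at n points in
an RKHS with kernel normalized at z₀: if LML = L then γ² = 1 - ⟨M𝟙, 𝟙⟩. -/
theorem stmt3 {X : Type*} {H : Type*} [NormedAddCommGroup H] [InnerProductSpace ℂ H]
    [CompleteSpace H]
    (ev : H →ₗ[ℂ] (X → ℂ)) (k : X → H)
    (hrep : ∀ (f : H) (z : X), ev f z = ⟪k z, f⟫_ℂ)
    (K : X → X → ℂ) (hK : ∀ z w, K z w = ev (k w) z)
    (z0 : X) (hnorm : ∀ z, K z z0 = 1)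
    {n : ℕ} (zs : Fin n → X) (hinj : Function.Injective zs)
    (L M : Matrix (Fin n) (Fin n) ℂ) (hL : ∀ i j, L i j = K (zs i) (zs j))
    (hM : L * M * L = L)
    (γ : ℝ)
    (hγ : γ = sSup {x : ℝ | ∃ f : H, (∀ i, ev f (zs i) = 0) ∧ ‖f‖ ≤ 1 ∧
      x = ‖ev f z0‖}) :
    ((γ : ℂ)) ^ 2 = 1 - ∑ i, ∑ j, M i j :=
  stmt3_general ev k hrep K hK z0 hnorm zs L M hL hM γ hγ
end

section
/- For z on the unit circle, the local Dirichlet integral of the atomic singular inner function S(w) = exp(-a(1+w)/(1-w)) satisfies D_z(S) = 2a/|1 - z|², and for B_n(w) = ((r - w)/(1 - rw))ⁿ with r = 1 - a/n, one has D_z(B_n) = n(1 - r²)/|1 - rz|² ≤ 4·D_z(S), and D_z(B_n) → D_z(S) as n → ∞. -/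
open MeasureTheory Filter

/-- Both `1 - r ≤ ‖1 - r z‖` and `‖1 - z‖ ≤ ‖1 - r z‖ + (1 - r)` follow from `‖z‖ ≤ 1`. -/
theorem norm_one_sub_le_two_mul_norm_one_sub_ofReal_mul {z : ℂ} (hz : ‖z‖ ≤ 1) {r : ℝ}
    (hr0 : 0 ≤ r) (hr1 : r ≤ 1) : ‖1 - z‖ ≤ 2 * ‖1 - (r : ℂ) * z‖ := by
  have hrz : ‖(r : ℂ) * z‖ ≤ r := by
    rw [norm_mul, Complex.norm_of_nonneg hr0]
    nlinarith [norm_nonneg z]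
  have hgap : 1 - r ≤ ‖1 - (r : ℂ) * z‖ := by
    have := norm_sub_norm_le (1 : ℂ) ((r : ℂ) * z)
    rw [norm_one] at this
    linarith
  have hmove : ‖((1 - r : ℝ) : ℂ) * z‖ ≤ 1 - r := by
    rw [norm_mul, Complex.norm_of_nonneg (by linarith)]
    nlinarith [norm_nonneg z]
  calc ‖1 - z‖ = ‖(1 - (r : ℂ) * z) - ((1 - r : ℝ) : ℂ) * z‖ := by push_cast; ring_nf
    _ ≤ ‖1 - (r : ℂ) * z‖ + ‖((1 - r : ℝ) : ℂ) * z‖ := norm_sub_le _ _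
    _ ≤ 2 * ‖1 - (r : ℂ) * z‖ := by linarith

theorem div_norm_one_sub_ofReal_mul_sq_le {z : ℂ} (hz : ‖z‖ ≤ 1) (hz1 : z ≠ 1) {r : ℝ}
    (hr0 : 0 ≤ r) (hr1 : r ≤ 1) {b : ℝ} (hb : 0 ≤ b) :
    b / ‖1 - (r : ℂ) * z‖ ^ 2 ≤ 4 * (b / ‖1 - z‖ ^ 2) := by
  have hpos : 0 < ‖1 - z‖ := norm_pos_iff.mpr (sub_ne_zero.mpr hz1.symm)
  have hsq : ‖1 - z‖ ^ 2 / 4 ≤ ‖1 - (r : ℂ) * z‖ ^ 2 := by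
    nlinarith [norm_one_sub_le_two_mul_norm_one_sub_ofReal_mul hz hr0 hr1]
  calc b / ‖1 - (r : ℂ) * z‖ ^ 2 ≤ b / (‖1 - z‖ ^ 2 / 4) :=
        div_le_div_of_nonneg_left hb (by positivity) hsq
    _ = 4 * (b / ‖1 - z‖ ^ 2) := by field_simp

theorem mul_one_sub_one_sub_div_sq {K : Type*} [Field K] {x : K} (hx : x ≠ 0) (a : K) :
    x * (1 - (1 - a / x) ^ 2) = a * (2 - a / x) := by
  field_simp
  ring

theorem mul_one_sub_one_sub_div_sq_le {K : Type*} [Field K] [LinearOrder K] [IsStrictOrderedRing K]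
    {x a : K} (hx : 0 ≤ x) (ha : 0 ≤ a) : x * (1 - (1 - a / x) ^ 2) ≤ 2 * a := by
  rcases hx.eq_or_lt with rfl | hx
  · simpa using ha
  rw [mul_one_sub_one_sub_div_sq hx.ne']
  nlinarith [div_nonneg ha hx.le]

theorem tendsto_nat_mul_one_sub_one_sub_div_sq_div {z : ℂ} (hz1 : z ≠ 1) (a : ℝ) :
    Tendsto (fun n : ℕ => (n : ℝ) * (1 - (1 - a / n) ^ 2) / ‖1 - ((1 - a / n : ℝ) : ℂ) * z‖ ^ 2)
      atTop (nhds (2 * a / ‖1 - z‖ ^ 2)) := by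
  have hdiv : Tendsto (fun n : ℕ => a / n) atTop (nhds 0) :=
    tendsto_const_div_atTop_nhds_zero_nat a
  have hnum : Tendsto (fun n : ℕ => (n : ℝ) * (1 - (1 - a / n) ^ 2)) atTop (nhds (2 * a)) := by
    have hlim : Tendsto (fun n : ℕ => a * (2 - a / n)) atTop (nhds (a * (2 - 0))) :=
      tendsto_const_nhds.mul (tendsto_const_nhds.sub hdiv)
    rw [sub_zero, mul_comm] at hlim
    refine hlim.congr' ?_
    filter_upwards [eventually_ne_atTop 0] with n hn
    exact (mul_one_sub_one_sub_div_sq (Nat.cast_ne_zero.mpr hn) a).symm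
  have hden : Tendsto (fun n : ℕ => ‖1 - ((1 - a / n : ℝ) : ℂ) * z‖ ^ 2) atTop
      (nhds (‖1 - z‖ ^ 2)) := by
    have hcont : Continuous fun t : ℝ => ‖1 - (t : ℂ) * z‖ ^ 2 := by fun_prop
    have hr : Tendsto (fun n : ℕ => 1 - a / n) atTop (nhds (1 - 0)) :=
      tendsto_const_nhds.sub hdiv
    rw [sub_zero] at hr
    have hlim := (hcont.tendsto 1).comp hr
    rwa [Complex.ofReal_one, one_mul] at hlim
  exact hnum.div hden (pow_ne_zero 2 (norm_ne_zero_iff.mpr (sub_ne_zero.mpr hz1.symm)))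

/-- For z on the unit circle, z ≠ 1: the local Dirichlet integral of
S(w) = exp(-a(1+w)/(1-w)) is D_z(S) = 2a/|1-z|²; for Bₙ with n-fold zero at
r = 1 - a/n one has D_z(Bₙ) = n(1-r²)/|1-rz|² ≤ 4 D_z(S), and D_z(Bₙ) → D_z(S). -/
theorem stmt7 (a : ℝ) (ha : 0 < a) (z : ℂ) (hz : ‖z‖ = 1) (hz1 : z ≠ 1) :
    (∫ w, 2 / ‖z - w‖ ^ 2
        ∂((ENNReal.ofReal a) • MeasureTheory.Measure.dirac (1 : ℂ))) =
      2 * a / ‖1 - z‖ ^ 2 ∧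
    (∀ n : ℕ, 0 < 1 - a / n →
      (n : ℝ) * (1 - (1 - a / n) ^ 2) / ‖1 - ((1 - a / n : ℝ) : ℂ) * z‖ ^ 2 ≤
        4 * (2 * a / ‖1 - z‖ ^ 2)) ∧
    Tendsto
      (fun n : ℕ =>
        (n : ℝ) * (1 - (1 - a / n) ^ 2) / ‖1 - ((1 - a / n : ℝ) : ℂ) * z‖ ^ 2)
      atTop (nhds (2 * a / ‖1 - z‖ ^ 2)) := by
  refine ⟨?_, fun n hn => ?_, tendsto_nat_mul_one_sub_one_sub_div_sq_div hz1 a⟩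
  · rw [integral_smul_measure, integral_dirac, ENNReal.toReal_ofReal ha.le, norm_sub_rev,
      smul_eq_mul]
    ring
  · have hr1 : 1 - a / n ≤ 1 := sub_le_self _ (by positivity)
    calc (n : ℝ) * (1 - (1 - a / n) ^ 2) / ‖1 - ((1 - a / n : ℝ) : ℂ) * z‖ ^ 2
        ≤ 2 * a / ‖1 - ((1 - a / n : ℝ) : ℂ) * z‖ ^ 2 :=
          div_le_div_of_nonneg_right (mul_one_sub_one_sub_div_sq_le n.cast_nonneg ha.le)
            (by positivity)
      _ ≤ 4 * (2 * a / ‖1 - z‖ ^ 2) :=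
          div_norm_one_sub_ofReal_mul_sq_le hz.le hz1 hn.le hr1 (by positivity)
end

section
/- Let h(t) = exp(-a(1+t)/(1-t))/(1-t) on [0,1) for a > 0, and set A(a) = (∫₀¹ t·h(t) dt)/(∫₀¹ h(t) dt). Then 1 - A(a) = (a·∫_a^∞ e^{-2s}/s² ds)/(∫_a^∞ e^{-2s}/s ds), and 1 - A(a) ~ 1/log(1/a) as a → 0⁺ (i.e., the ratio of the two sides tends to 1). -/
/-!
The substitution `s = a / (1 - t)` maps `(0, 1)` onto `(a, ∞)` with `ds = a / (1 - t)² dt` and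
turns `e^{-2s}` into `e^{-a} e^{-a(1+t)/(1-t)}`; with `Iₙ(a) = ∫_a^∞ e^{-2s} / sⁿ ds` it carries
`∫ h` to `e^a I₁(a)` and `∫ (1 - t) h` to `a e^a I₂(a)`, which is the formula for `1 - A(a)`.
Integration by parts gives `a I₂(a) = e^{-2a} - 2a I₁(a)`, and comparing `e^{-2s} / s` with
`1 / s` on `(a, 1]` gives `I₁(a) = log (1 / a) + O(1)`. Hence `a I₂(a) → 1` and
`I₁(a) ~ log (1 / a)`.
-/

open Filter Set Real MeasureTheory Topology Asymptotics

namespace MomentRatio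

noncomputable def kernel (a t : ℝ) : ℝ := exp (-a * (1 + t) / (1 - t)) / (1 - t)

noncomputable def I₁ (a : ℝ) : ℝ := ∫ s in Ioi a, exp (-2 * s) / s

noncomputable def I₂ (a : ℝ) : ℝ := ∫ s in Ioi a, exp (-2 * s) / s ^ 2

theorem integrableOn_exp_neg_mul_div_pow {a b : ℝ} (ha : 0 < a) (hb : 0 < b) (n : ℕ) :
    IntegrableOn (fun s => exp (-b * s) / s ^ n) (Ioi a) := by
  refine ((exp_neg_integrableOn_Ioi a hb).const_mul (a ^ n)⁻¹).mono'
    (by fun_prop : Measurable fun s : ℝ => exp (-b * s) / s ^ n).aestronglyMeasurable ?_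
  filter_upwards [ae_restrict_mem measurableSet_Ioi] with s (hs : a < s)
  rw [norm_div, norm_of_nonneg (exp_pos _).le, norm_pow, norm_of_nonneg (ha.trans hs).le,
    inv_mul_eq_div]
  gcongr

theorem integrableOn_integrand_I₁ {a : ℝ} (ha : 0 < a) :
    IntegrableOn (fun s => exp (-2 * s) / s) (Ioi a) := by
  simpa using integrableOn_exp_neg_mul_div_pow ha two_pos 1

theorem integrableOn_integrand_I₂ {a : ℝ} (ha : 0 < a) :
    IntegrableOn (fun s => exp (-2 * s) / s ^ 2) (Ioi a) :=
  integrableOn_exp_neg_mul_div_pow ha two_pos 2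

section ChangeOfVariables

variable {E : Type*} [NormedAddCommGroup E] [NormedSpace ℝ E] {a : ℝ}

theorem image_div_one_sub_Ioo (ha : 0 < a) : (fun t => a / (1 - t)) '' Ioo 0 1 = Ioi a := by
  ext s
  simp only [mem_image, mem_Ioo, mem_Ioi]
  constructor
  · rintro ⟨t, ⟨ht0, ht1⟩, rfl⟩
    rw [lt_div_iff₀ (by linarith)]
    nlinarith
  · intro hs
    have hs0 : 0 < s := ha.trans hs
    refine ⟨1 - a / s, ⟨?_, ?_⟩, ?_⟩
    · linarith [(div_lt_one hs0).2 hs]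
    · linarith [div_pos ha hs0]
    · rw [sub_sub_cancel, div_div_cancel₀ ha.ne']

theorem hasDerivAt_div_one_sub {t : ℝ} (ht : t ≠ 1) :
    HasDerivAt (fun t => a / (1 - t)) (a / (1 - t) ^ 2) t := by
  have h := (hasDerivAt_const t a).div ((hasDerivAt_const t (1 : ℝ)).sub (hasDerivAt_id t))
    (sub_ne_zero.2 ht.symm)
  exact h.congr_deriv (by simp)

theorem injOn_div_one_sub (ha : a ≠ 0) : InjOn (fun t => a / (1 - t)) (Ioo 0 1) := by
  intro x hx y hy hxy
  have hx1 : 1 - x ≠ 0 := by linarith [hx.2]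
  have hy1 : 1 - y ≠ 0 := by linarith [hy.2]
  field_simp at hxy
  linarith

theorem integrableOn_Ioi_iff_integrableOn_Ioo (ha : 0 < a) (g : ℝ → E) :
    IntegrableOn g (Ioi a) ↔
      IntegrableOn (fun t => (a / (1 - t) ^ 2) • g (a / (1 - t))) (Ioo 0 1) := by
  rw [← image_div_one_sub_Ioo ha, integrableOn_image_iff_integrableOn_abs_deriv_smul
    measurableSet_Ioo (fun t ht => (hasDerivAt_div_one_sub ht.2.ne).hasDerivWithinAt)
    (injOn_div_one_sub ha.ne')]
  simp_rw [abs_of_nonneg (div_nonneg ha.le (sq_nonneg _))]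

theorem integral_Ioi_eq_integral_Ioo (ha : 0 < a) (g : ℝ → E) :
    ∫ s in Ioi a, g s = ∫ t in Ioo 0 1, (a / (1 - t) ^ 2) • g (a / (1 - t)) := by
  rw [← image_div_one_sub_Ioo ha, integral_image_eq_integral_abs_deriv_smul
    measurableSet_Ioo (fun t ht => (hasDerivAt_div_one_sub ht.2.ne).hasDerivWithinAt)
    (injOn_div_one_sub ha.ne')]
  simp_rw [abs_of_nonneg (div_nonneg ha.le (sq_nonneg _))]

end ChangeOfVariables

section Kernel

variable {a t : ℝ}

theorem exp_kernel_exponent_eq (ht : t ≠ 1) :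
    exp (-a * (1 + t) / (1 - t)) = exp a * exp (-2 * (a / (1 - t))) := by
  have : 1 - t ≠ 0 := sub_ne_zero.2 ht.symm
  rw [← exp_add]
  congr 1
  field_simp
  ring

theorem kernel_eq (ha : a ≠ 0) (ht : t ≠ 1) :
    kernel a t = exp a * (a / (1 - t) ^ 2 * (exp (-2 * (a / (1 - t))) / (a / (1 - t)))) := by
  have : 1 - t ≠ 0 := sub_ne_zero.2 ht.symm
  rw [kernel, exp_kernel_exponent_eq ht]
  field_simp

theorem one_sub_mul_kernel_eq (ha : a ≠ 0) (ht : t ≠ 1) :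
    (1 - t) * kernel a t =
      a * exp a * (a / (1 - t) ^ 2 * (exp (-2 * (a / (1 - t))) / (a / (1 - t)) ^ 2)) := by
  have : 1 - t ≠ 0 := sub_ne_zero.2 ht.symm
  rw [kernel, exp_kernel_exponent_eq ht]
  field_simp

theorem integrableOn_kernel (ha : 0 < a) : IntegrableOn (kernel a) (Ioo 0 1) := by
  have h := (integrableOn_Ioi_iff_integrableOn_Ioo ha _).1 (integrableOn_integrand_I₁ ha)
  exact IntegrableOn.congr_fun (h.const_mul (exp a)) (fun t ht => (kernel_eq ha.ne' ht.2.ne).symm)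
    measurableSet_Ioo

theorem integrableOn_one_sub_mul_kernel (ha : 0 < a) :
    IntegrableOn (fun t => (1 - t) * kernel a t) (Ioo 0 1) := by
  have h := (integrableOn_Ioi_iff_integrableOn_Ioo ha _).1 (integrableOn_integrand_I₂ ha)
  exact IntegrableOn.congr_fun (h.const_mul (a * exp a))
    (fun t ht => (one_sub_mul_kernel_eq ha.ne' ht.2.ne).symm) measurableSet_Ioo

theorem integral_kernel (ha : 0 < a) : ∫ t in Ioo 0 1, kernel a t = exp a * I₁ a := by
  rw [I₁, integral_Ioi_eq_integral_Ioo ha, ← integral_const_mul]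
  exact setIntegral_congr_fun measurableSet_Ioo fun t ht => kernel_eq ha.ne' ht.2.ne

theorem integral_one_sub_mul_kernel (ha : 0 < a) :
    ∫ t in Ioo 0 1, (1 - t) * kernel a t = a * exp a * I₂ a := by
  rw [I₂, integral_Ioi_eq_integral_Ioo ha, ← integral_const_mul]
  exact setIntegral_congr_fun measurableSet_Ioo fun t ht => one_sub_mul_kernel_eq ha.ne' ht.2.ne

end Kernel

theorem I₁_pos {a : ℝ} (ha : 0 < a) : 0 < I₁ a := by
  have hpos : ∀ s ∈ Ioi a, 0 < exp (-2 * s) / s := fun s hs => div_pos (exp_pos _) (ha.trans hs)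
  rw [I₁, setIntegral_pos_iff_support_of_nonneg_ae
    ((ae_restrict_iff' measurableSet_Ioi).2 (ae_of_all _ fun s hs => (hpos s hs).le))
    (integrableOn_integrand_I₁ ha)]
  have : Function.support (fun s => exp (-2 * s) / s) ∩ Ioi a = Ioi a :=
    inter_eq_right.2 fun s hs => (hpos s hs).ne'
  rw [this, Real.volume_Ioi]
  exact ENNReal.zero_lt_top

theorem one_sub_integral_mul_kernel_div {a : ℝ} (ha : 0 < a) :
    1 - (∫ t in Ioo 0 1, t * kernel a t) / (∫ t in Ioo 0 1, kernel a t) = a * I₂ a / I₁ a := by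
  have hsplit : ∫ t in Ioo 0 1, t * kernel a t =
      (∫ t in Ioo 0 1, kernel a t) - ∫ t in Ioo 0 1, (1 - t) * kernel a t := by
    rw [← integral_sub (integrableOn_kernel ha) (integrableOn_one_sub_mul_kernel ha)]
    congr 1 with t
    ring
  rw [hsplit, integral_kernel ha, integral_one_sub_mul_kernel ha]
  have := (I₁_pos ha).ne'
  field_simp
  ring

theorem two_mul_I₁_add_I₂ {a : ℝ} (ha : 0 < a) : 2 * I₁ a + I₂ a = exp (-2 * a) / a := by
  have hderiv : ∀ s ∈ Ici a, HasDerivAt (fun s => -(exp (-2 * s) / s))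
      (2 * (exp (-2 * s) / s) + exp (-2 * s) / s ^ 2) s := by
    intro s hs
    have hs0 : s ≠ 0 := (ha.trans_le hs).ne'
    have h := (((hasDerivAt_id s).const_mul (-2)).exp.div (hasDerivAt_id s) hs0).neg
    refine h.congr_deriv ?_
    simp only [id]
    field_simp
    ring
  have hlim : Tendsto (fun s => -(exp (-2 * s) / s)) atTop (𝓝 0) := by
    have hexp : Tendsto (fun s : ℝ => exp (-2 * s)) atTop (𝓝 0) :=
      tendsto_exp_atBot.comp (tendsto_id.const_mul_atTop_of_neg (by norm_num))
    simpa [div_eq_mul_inv] using (hexp.mul tendsto_inv_atTop_zero).neg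
  have h := integral_Ioi_of_hasDerivAt_of_tendsto' hderiv
    (((integrableOn_integrand_I₁ ha).const_mul 2).add (integrableOn_integrand_I₂ ha)) hlim
  rw [integral_add ((integrableOn_integrand_I₁ ha).const_mul 2) (integrableOn_integrand_I₂ ha),
    integral_const_mul] at h
  rw [I₁, I₂, h]
  ring

theorem I₁_add_log_mem_Icc {a : ℝ} (ha : 0 < a) (ha1 : a ≤ 1) :
    I₁ a + log a ∈ Icc (I₁ 1 - 2) (I₁ 1) := by
  have hpos : ∀ s ∈ uIcc a 1, 0 < s := fun s hs => ha.trans_le (uIcc_of_le ha1 ▸ hs).1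
  have hcont : ContinuousOn (fun s => exp (-2 * s) / s) (uIcc a 1) :=
    (by fun_prop : Continuous fun s => exp (-2 * s)).continuousOn.div continuousOn_id
      fun s hs => (hpos s hs).ne'
  have hinv : ∫ s in a..1, s⁻¹ = -log a := by
    rw [integral_inv_of_pos ha one_pos, one_div, log_inv]
  have hsplit : I₁ a = (∫ s in a..1, exp (-2 * s) / s) + I₁ 1 :=
    (intervalIntegral.integral_interval_add_Ioi (integrableOn_integrand_I₁ ha)
      (integrableOn_integrand_I₁ one_pos)).symm
  have hinvint : IntervalIntegrable (fun s : ℝ => s⁻¹) volume a 1 :=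
    intervalIntegral.intervalIntegrable_inv (fun s hs => (hpos s hs).ne') continuousOn_id
  have hupper : ∫ s in a..1, exp (-2 * s) / s ≤ ∫ s in a..1, s⁻¹ :=
    intervalIntegral.integral_mono_on ha1 hcont.intervalIntegrable hinvint fun s hs => by
      rw [← one_div]
      gcongr
      · exact (ha.trans_le hs.1).le
      · exact exp_le_one_iff.2 (by linarith [ha.trans_le hs.1])
  have hlower : ∫ s in a..1, (s⁻¹ - 2) ≤ ∫ s in a..1, exp (-2 * s) / s :=
    intervalIntegral.integral_mono_on ha1 (hinvint.sub intervalIntegrable_const)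
      hcont.intervalIntegrable fun s hs => by
      have hs0 : 0 < s := ha.trans_le hs.1
      rw [le_div_iff₀ hs0, sub_mul, inv_mul_cancel₀ hs0.ne']
      linarith [add_one_le_exp (-2 * s)]
  rw [intervalIntegral.integral_sub hinvint intervalIntegrable_const, hinv,
    intervalIntegral.integral_const, smul_eq_mul] at hlower
  constructor <;> linarith

theorem isBigO_I₁_add_log : (fun a => I₁ a + log a) =O[𝓝[>] 0] (fun _ => (1 : ℝ)) := by
  refine IsBigO.of_bound (|I₁ 1| + 2) ?_
  filter_upwards [Ioo_mem_nhdsGT one_pos] with a ha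
  obtain ⟨hlower, hupper⟩ := I₁_add_log_mem_Icc ha.1 ha.2.le
  rw [norm_one, mul_one, norm_eq_abs, abs_le]
  constructor <;> linarith [neg_abs_le (I₁ 1), le_abs_self (I₁ 1)]

theorem tendsto_I₁_div_neg_log : Tendsto (fun a => I₁ a / -log a) (𝓝[>] 0) (𝓝 1) := by
  have hlog : Tendsto (fun a => (-log a)⁻¹) (𝓝[>] 0) (𝓝 0) :=
    tendsto_inv_atTop_zero.comp (tendsto_neg_atBot_atTop.comp tendsto_log_nhdsGT_zero)
  have hrem : Tendsto (fun a => (I₁ a + log a) * (-log a)⁻¹) (𝓝[>] 0) (𝓝 0) :=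
    (isBigO_I₁_add_log.mul (isBigO_refl _ _)).trans_tendsto (by simpa using hlog)
  have hlim : Tendsto (fun a => 1 + (I₁ a + log a) * (-log a)⁻¹) (𝓝[>] 0) (𝓝 1) := by
    simpa using hrem.const_add 1
  refine hlim.congr' ?_
  filter_upwards [Ioo_mem_nhdsGT one_pos] with a ha
  have : log a ≠ 0 := (log_neg ha.1 ha.2).ne
  field_simp
  ring

theorem tendsto_mul_I₁ : Tendsto (fun a => a * I₁ a) (𝓝[>] 0) (𝓝 0) := by
  have hrem : Tendsto (fun a => a * (I₁ a + log a)) (𝓝[>] 0) (𝓝 0) :=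
    ((isBigO_refl _ _).mul isBigO_I₁_add_log).trans_tendsto
      (by simpa using (continuous_id'.tendsto' (0 : ℝ) 0 rfl).mono_left nhdsWithin_le_nhds)
  have hmul_log : Tendsto (fun a => a * log a) (𝓝[>] 0) (𝓝 0) := by
    simpa using (continuous_mul_log.tendsto 0).mono_left nhdsWithin_le_nhds
  have hlim := hrem.sub hmul_log
  rw [sub_zero] at hlim
  exact hlim.congr fun a => by ring

theorem tendsto_mul_I₂ : Tendsto (fun a => a * I₂ a) (𝓝[>] 0) (𝓝 1) := by
  have hexp : Tendsto (fun a => exp (-2 * a)) (𝓝[>] 0) (𝓝 1) := by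
    simpa using ((by fun_prop : Continuous fun a => exp (-2 * a)).tendsto 0).mono_left
      nhdsWithin_le_nhds
  have hlim := hexp.sub (tendsto_mul_I₁.const_mul 2)
  rw [mul_zero, sub_zero] at hlim
  refine hlim.congr' ?_
  filter_upwards [self_mem_nhdsWithin] with a (ha : 0 < a)
  have h := two_mul_I₁_add_I₂ ha
  field_simp at h ⊢
  linarith

end MomentRatio

/-- With h(t) = exp(-a(1+t)/(1-t))/(1-t) on [0,1) and
A(a) = (∫₀¹ t h(t) dt)/(∫₀¹ h(t) dt), one has
1 - A(a) = (a ∫_a^∞ e^{-2s}/s² ds)/(∫_a^∞ e^{-2s}/s ds), and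
1 - A(a) ~ 1/log(1/a) as a → 0⁺. -/
theorem stmt8 (h : ℝ → ℝ → ℝ)
    (hh : ∀ a t, h a t = Real.exp (-a * (1 + t) / (1 - t)) / (1 - t))
    (A : ℝ → ℝ)
    (hA : ∀ a, A a = (∫ t in Set.Ioo (0 : ℝ) 1, t * h a t) / (∫ t in Set.Ioo (0 : ℝ) 1, h a t)) :
    (∀ a > 0, 1 - A a =
      (a * ∫ s in Set.Ioi a, Real.exp (-2 * s) / s ^ 2) /
        (∫ s in Set.Ioi a, Real.exp (-2 * s) / s)) ∧
    Tendsto (fun a => (1 - A a) * Real.log (1 / a)) (nhdsWithin 0 (Set.Ioi 0)) (nhds 1) := by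
  have hratio : ∀ a > 0, 1 - A a = a * MomentRatio.I₂ a / MomentRatio.I₁ a := fun a ha => by
    rw [hA, show h a = MomentRatio.kernel a from funext (hh a)]
    exact MomentRatio.one_sub_integral_mul_kernel_div ha
  refine ⟨hratio, ?_⟩
  have hlim := MomentRatio.tendsto_mul_I₂.div MomentRatio.tendsto_I₁_div_neg_log one_ne_zero
  rw [div_one] at hlim
  refine hlim.congr' ?_
  filter_upwards [self_mem_nhdsWithin] with a ha
  rw [Pi.div_apply, hratio a ha, one_div, Real.log_inv, div_div_eq_mul_div, div_mul_eq_mul_div]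
end

section
/- Let Z = {z_n} be points in the open unit disc partitioned into sets Z_k, with points λ_k on the unit circle, and set a_k = 2·∑_{z ∈ Z_k} |λ_k - z|²/(1 - |z|²). Then for all ζ on the unit circle, ∑_{z ∈ Z} (1 - |z|²)/|ζ - z|² ≤ ∑_k 2a_k/|ζ - λ_k|². -/
/-!
For `|ζ| = |λ| = 1` and any `w`, the identity
`(1 - |w|²)(ζ - λ) = (ζ - w)(1 - w̄λ) - (λ - w)(1 - w̄ζ)` and `|1 - w̄λ| = |λ - w|` give
`(1 - |w|²)|ζ - λ| ≤ 2|λ - w||ζ - w|`. Squared, this bounds the Poisson kernel term of each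
`w ∈ Z_k` by `4|λ_k - w|² / ((1 - |w|²)|ζ - λ_k|²)`; summing over the fibre `Z_k` gives
`2a_k / |ζ - λ_k|²`.
-/

open scoped ENNReal ComplexConjugate

namespace Complex

theorem norm_one_sub_conj_mul (w : ℂ) {l : ℂ} (hl : ‖l‖ = 1) :
    ‖1 - conj w * l‖ = ‖l - w‖ := by
  have hconj : 1 - conj w * l = conj (l - w) * l := by
    rw [map_sub, sub_mul, conj_mul', hl]
    push_cast
    ring
  rw [hconj, norm_mul, norm_conj, hl, mul_one]

theorem abs_one_sub_norm_sq_mul_norm_sub_le {ζ l : ℂ} (hζ : ‖ζ‖ = 1) (hl : ‖l‖ = 1) (w : ℂ) :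
    |1 - ‖w‖ ^ 2| * ‖ζ - l‖ ≤ 2 * (‖l - w‖ * ‖ζ - w‖) := by
  have hid : ((1 - ‖w‖ ^ 2 : ℝ) : ℂ) * (ζ - l) =
      (ζ - w) * (1 - conj w * l) - (l - w) * (1 - conj w * ζ) := by
    push_cast
    rw [← mul_conj']
    ring
  calc |1 - ‖w‖ ^ 2| * ‖ζ - l‖ = ‖((1 - ‖w‖ ^ 2 : ℝ) : ℂ) * (ζ - l)‖ := by
        rw [norm_mul, norm_real, Real.norm_eq_abs]
    _ ≤ ‖(ζ - w) * (1 - conj w * l)‖ + ‖(l - w) * (1 - conj w * ζ)‖ := by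
        rw [hid]
        exact norm_sub_le _ _
    _ = 2 * (‖l - w‖ * ‖ζ - w‖) := by
        rw [norm_mul, norm_mul, norm_one_sub_conj_mul w hl, norm_one_sub_conj_mul w hζ]
        ring

theorem poisson_kernel_mul_norm_sub_sq_le {ζ l w : ℂ} (hζ : ‖ζ‖ = 1) (hl : ‖l‖ = 1)
    (hw : ‖w‖ < 1) :
    (1 - ‖w‖ ^ 2) / ‖ζ - w‖ ^ 2 * ‖ζ - l‖ ^ 2 ≤ 4 * (‖l - w‖ ^ 2 / (1 - ‖w‖ ^ 2)) := by
  have hden : 0 < 1 - ‖w‖ ^ 2 := by nlinarith [norm_nonneg w]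
  have hζw : 0 < ‖ζ - w‖ := norm_pos_iff.2 (sub_ne_zero.2 (by rintro rfl; linarith))
  have hkey := abs_one_sub_norm_sq_mul_norm_sub_le hζ hl w
  rw [abs_of_pos hden] at hkey
  rw [div_mul_eq_mul_div, mul_div_assoc', div_le_div_iff₀ (by positivity) hden]
  nlinarith [mul_le_mul hkey hkey (by positivity) (by positivity)]

theorem ofReal_poisson_kernel_le {ζ l w : ℂ} (hζ : ‖ζ‖ = 1) (hl : ‖l‖ = 1) (hw : ‖w‖ < 1) :
    ENNReal.ofReal ((1 - ‖w‖ ^ 2) / ‖ζ - w‖ ^ 2) ≤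
      4 * ENNReal.ofReal (‖l - w‖ ^ 2 / (1 - ‖w‖ ^ 2)) / ENNReal.ofReal (‖ζ - l‖ ^ 2) := by
  have hden : 0 < 1 - ‖w‖ ^ 2 := by nlinarith [norm_nonneg w]
  have hlw : 0 < ‖l - w‖ := norm_pos_iff.2 (sub_ne_zero.2 (by rintro rfl; linarith))
  -- the numerator is nonzero, so the bound also holds (as `⊤`) when `ζ = l`
  have hnum : 4 * ENNReal.ofReal (‖l - w‖ ^ 2 / (1 - ‖w‖ ^ 2)) ≠ 0 := by
    simp only [ne_eq, mul_eq_zero, OfNat.ofNat_ne_zero, ENNReal.ofReal_eq_zero, not_le,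
      false_or]
    positivity
  rw [ENNReal.le_div_iff_mul_le (.inr hnum) (.inl ENNReal.ofReal_ne_top),
    ← ENNReal.ofReal_mul (by positivity), ← ENNReal.ofReal_ofNat 4,
    ← ENNReal.ofReal_mul (by norm_num)]
  exact ENNReal.ofReal_le_ofReal (poisson_kernel_mul_norm_sub_sq_le hζ hl hw)

end Complex

/-- With Z = {zₙ} ⊂ 𝔻 partitioned by p into classes Z_k, λ_k ∈ 𝕋 and
a_k = 2∑_{z ∈ Z_k} |λ_k - z|²/(1-|z|²), one has for all ζ ∈ 𝕋:
∑_{z ∈ Z} (1-|z|²)/|ζ-z|² ≤ ∑_k 2 a_k/|ζ-λ_k|². -/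
theorem stmt10 (z : ℕ → ℂ) (hz : ∀ n, ‖z n‖ < 1)
    (p : ℕ → ℕ) (lam : ℕ → ℂ) (hlam : ∀ k, ‖lam k‖ = 1)
    (a : ℕ → ℝ≥0∞)
    (ha : ∀ k, a k = 2 * ∑' n : {n // p n = k},
      ENNReal.ofReal (‖lam k - z n‖ ^ 2 / (1 - ‖z n‖ ^ 2)))
    (ζ : ℂ) (hζ : ‖ζ‖ = 1) :
    ∑' n, ENNReal.ofReal ((1 - ‖z n‖ ^ 2) / ‖ζ - z n‖ ^ 2) ≤
      ∑' k, 2 * a k / ENNReal.ofReal (‖ζ - lam k‖ ^ 2) := by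
  rw [← ENNReal.tsum_fiberwise _ p]
  refine ENNReal.tsum_le_tsum fun k => ?_
  calc ∑' n : {n // p n = k}, ENNReal.ofReal ((1 - ‖z n‖ ^ 2) / ‖ζ - z n‖ ^ 2)
      ≤ ∑' n : {n // p n = k}, 4 * ENNReal.ofReal (‖lam k - z n‖ ^ 2 / (1 - ‖z n‖ ^ 2)) *
          (ENNReal.ofReal (‖ζ - lam k‖ ^ 2))⁻¹ :=
        ENNReal.tsum_le_tsum fun n => Complex.ofReal_poisson_kernel_le hζ (hlam k) (hz n)
    _ = 2 * a k / ENNReal.ofReal (‖ζ - lam k‖ ^ 2) := by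
        rw [ENNReal.tsum_mul_right, ENNReal.tsum_mul_left, ha k, ← mul_assoc, div_eq_mul_inv]
        norm_num
end

section
/- Let {z_n} be a Blaschke sequence in the unit disc, write z_n = r_n·e^{it_n}, and let w_n = s_n·e^{it_n} with r_n ≤ s_n < 1. If f ∈ H², B_Z and B_W are the Blaschke products with zeros {z_n} and {w_n}, and ‖B_Z f‖²_𝒟 = 1 with P[|f|²](w_n) ≤ P[|f|²](z_n) + (1 - r_n/s_n) for each n, then ‖B_W f‖²_𝒟 ≤ |B_W(0)/B_Z(0)|². -/
/-- If `0 < r n ≤ a n ≤ 1` and `∑ (1 - r n)` converges, then `∑ (-log (a n))` converges. -/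
lemma aux_summable_neg_log (r a : ℕ → ℝ) (hr : ∀ n, 0 < r n) (hra : ∀ n, r n ≤ a n)
    (ha1 : ∀ n, a n ≤ 1) (hsum : Summable fun n => 1 - r n) :
    Summable fun n => -Real.log (a n) := by
  have htend : Filter.Tendsto (fun n => 1 - r n) Filter.atTop (nhds 0) :=
    hsum.tendsto_atTop_zero
  have hev : ∀ᶠ n in Filter.atTop, 1 - r n < 1 / 2 := by
    have := htend.eventually (gt_mem_nhds (by norm_num : (0:ℝ) < 1/2))
    exact this
  obtain ⟨N, hN⟩ := Filter.eventually_atTop.mp hev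
  rw [← summable_nat_add_iff N]
  refine Summable.of_nonneg_of_le ?_ ?_ (((summable_nat_add_iff N).mpr hsum).mul_left 2)
  · intro n
    simp only [neg_nonneg]
    exact Real.log_nonpos (le_of_lt (lt_of_lt_of_le (hr _) (hra _))) (ha1 _)
  · intro n
    have hrn : (1:ℝ)/2 ≤ r (n + N) := by
      have := hN (n + N) (Nat.le_add_left N n)
      linarith
    have h0 : 0 < a (n + N) := lt_of_lt_of_le (hr _) (hra _)
    have hlog : Real.log (a (n + N))⁻¹ ≤ (a (n + N))⁻¹ - 1 :=
      Real.log_le_sub_one_of_pos (inv_pos.mpr h0)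
    rw [Real.log_inv] at hlog
    have hinv : (a (n + N))⁻¹ - 1 = (1 - a (n + N)) / a (n + N) := by
      field_simp
    have h2 : (1 - a (n + N)) / a (n + N) ≤ 2 * (1 - r (n + N)) := by
      have h1a : 1 - a (n + N) ≤ 1 - r (n + N) := by linarith [hra (n + N)]
      have hha : (1:ℝ)/2 ≤ a (n + N) := le_trans hrn (hra _)
      have hnn : 0 ≤ 1 - a (n + N) := by linarith [ha1 (n + N)]
      calc (1 - a (n + N)) / a (n + N) ≤ (1 - a (n + N)) / (1/2) := by
            apply div_le_div_of_nonneg_left hnn (by norm_num) hha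
        _ = 2 * (1 - a (n + N)) := by ring
        _ ≤ 2 * (1 - r (n + N)) := by linarith
    linarith [hinv ▸ hlog]

/-- Pushing zeros out: with zₙ = rₙe^{itₙ}, wₙ = sₙe^{itₙ}, rₙ ≤ sₙ < 1, a Blaschke
sequence {zₙ}, P the Poisson integral of |f|², and Carleson's formula
‖B f‖²_𝒟 = ∑ P(bₙ) + ‖f‖²_𝒟 for the two Blaschke products, if ‖B_Z f‖²_𝒟 = 1 and
P(wₙ) ≤ P(zₙ) + (1 - rₙ/sₙ), then ‖B_W f‖²_𝒟 ≤ |B_W(0)/B_Z(0)|², where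
|B_Z(0)| = ∏ rₙ and |B_W(0)| = ∏ sₙ. -/
theorem stmt11 (r s t : ℕ → ℝ)
    (hr : ∀ n, 0 < r n) (hrs : ∀ n, r n ≤ s n) (hs1 : ∀ n, s n < 1)
    (hBlaschke : Summable fun n => 1 - r n)
    (P : ℂ → ℝ) (hPpos : ∀ w, 0 ≤ P w)
    (Nf NZ NW : ℝ) (hNf : 0 ≤ Nf)
    (hPz : Summable fun n => P ((r n : ℂ) * Complex.exp ((t n : ℂ) * Complex.I)))
    (hPw : Summable fun n => P ((s n : ℂ) * Complex.exp ((t n : ℂ) * Complex.I)))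
    (hNZ : NZ = (∑' n, P ((r n : ℂ) * Complex.exp ((t n : ℂ) * Complex.I))) + Nf)
    (hNW : NW = (∑' n, P ((s n : ℂ) * Complex.exp ((t n : ℂ) * Complex.I))) + Nf)
    (hone : NZ = 1)
    (hPoisson : ∀ n, P ((s n : ℂ) * Complex.exp ((t n : ℂ) * Complex.I)) ≤
      P ((r n : ℂ) * Complex.exp ((t n : ℂ) * Complex.I)) + (1 - r n / s n)) :
    NW ≤ ((∏' n, s n) / (∏' n, r n)) ^ 2 := by
  have hs0 : ∀ n, 0 < s n := fun n => lt_of_lt_of_le (hr n) (hrs n)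
  have hr1 : ∀ n, r n < 1 := fun n => lt_of_le_of_lt (hrs n) (hs1 n)
  -- summability of logs
  have hlogr : Summable fun n => Real.log (r n) := by
    have := aux_summable_neg_log r r hr (fun n => le_refl _) (fun n => (hr1 n).le) hBlaschke
    simpa using this.neg
  have hlogs : Summable fun n => Real.log (s n) := by
    have := aux_summable_neg_log r s hr hrs (fun n => (hs1 n).le) hBlaschke
    simpa using this.neg
  -- infinite products via exp of sums
  have hProdr : HasProd r (Real.exp (∑' n, Real.log (r n))) := by
    have := hlogr.hasSum.rexp
    refine this.congr_fun fun n => ?_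
    simp [Function.comp, Real.exp_log (hr n)]
  have hProds : HasProd s (Real.exp (∑' n, Real.log (s n))) := by
    have := hlogs.hasSum.rexp
    refine this.congr_fun fun n => ?_
    simp [Function.comp, Real.exp_log (hs0 n)]
  have hPr : (∏' n, r n) = Real.exp (∑' n, Real.log (r n)) := hProdr.tprod_eq
  have hPs : (∏' n, s n) = Real.exp (∑' n, Real.log (s n)) := hProds.tprod_eq
  set L : ℝ := (∑' n, Real.log (s n)) - ∑' n, Real.log (r n) with hL
  have hQ : (∏' n, s n) / (∏' n, r n) = Real.exp L := by
    rw [hPr, hPs, ← Real.exp_sub]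
  -- x := ∑ (1 - r/s)
  have hxsum : Summable fun n => 1 - r n / s n := by
    apply hBlaschke.of_nonneg_of_le
    · intro n
      have : r n / s n ≤ 1 := div_le_one_of_le₀ (hrs n) (hs0 n).le
      linarith
    · intro n
      have : r n ≤ r n / s n := by
        rw [le_div_iff₀ (hs0 n)]
        nlinarith [(hr n).le, (hs1 n).le]
      linarith
  set x : ℝ := ∑' n, (1 - r n / s n) with hx
  have hx0 : 0 ≤ x := tsum_nonneg fun n => by
    have : r n / s n ≤ 1 := div_le_one_of_le₀ (hrs n) (hs0 n).le
    linarith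
  -- x ≤ L
  have hxL : x ≤ L := by
    have hterm : ∀ n, 1 - r n / s n ≤ Real.log (s n) - Real.log (r n) := by
      intro n
      have h1 : Real.log (r n / s n) ≤ r n / s n - 1 :=
        Real.log_le_sub_one_of_pos (div_pos (hr n) (hs0 n))
      rw [Real.log_div (hr n).ne' (hs0 n).ne'] at h1
      linarith
    have hsub : Summable fun n => Real.log (s n) - Real.log (r n) := hlogs.sub hlogr
    calc x ≤ ∑' n, (Real.log (s n) - Real.log (r n)) :=
          Summable.tsum_le_tsum hterm hxsum hsub
      _ = L := Summable.tsum_sub hlogs hlogr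
  -- NW ≤ 1 + x
  have hNWx : NW ≤ 1 + x := by
    have h1 : (∑' n, P ((s n : ℂ) * Complex.exp ((t n : ℂ) * Complex.I))) ≤
        (∑' n, P ((r n : ℂ) * Complex.exp ((t n : ℂ) * Complex.I))) + x := by
      calc (∑' n, P ((s n : ℂ) * Complex.exp ((t n : ℂ) * Complex.I)))
          ≤ ∑' n, (P ((r n : ℂ) * Complex.exp ((t n : ℂ) * Complex.I)) + (1 - r n / s n)) :=
            Summable.tsum_le_tsum hPoisson hPw (hPz.add hxsum)
        _ = (∑' n, P ((r n : ℂ) * Complex.exp ((t n : ℂ) * Complex.I))) + x :=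
            Summable.tsum_add hPz hxsum
    rw [hNW]
    rw [hNZ] at hone
    linarith
  have hexpx : 1 + x ≤ Real.exp x := Real.add_one_le_exp x |>.trans_eq' (by ring_nf)
  have hQ1 : 1 ≤ (∏' n, s n) / (∏' n, r n) := by
    rw [hQ]
    exact Real.one_le_exp (le_trans hx0 hxL)
  calc NW ≤ 1 + x := hNWx
    _ ≤ Real.exp x := by linarith [Real.add_one_le_exp x]
    _ ≤ Real.exp L := Real.exp_le_exp.mpr hxL
    _ = (∏' n, s n) / (∏' n, r n) := hQ.symm
    _ ≤ ((∏' n, s n) / (∏' n, r n)) ^ 2 := by nlinarith [hQ1]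
end

section
/- In the reproducing kernel Hilbert space H₀ on the unit disc with kernel K₀(z,w) = 1/(1 - (z·w̄)²), every function is even, the map g ↦ g(z²) is a unitary from H² onto H₀, and for r, t ∈ (0,1) the extremal value γ₀(t) = sup{|f(0)| : f ∈ H₀, f(-r) = f(t) = 0, ‖f‖ ≤ 1} equals r²t² if t ≠ r and equals r² if t = r. In particular γ₀ is discontinuous at t = r and not monotone increasing on (0,1). -/
open scoped InnerProductSpace
open Filter Topology

/-!
The kernel of `H₀` is that of `H²` composed with `z ↦ z²`: `⟪k₀ z, k₀ w⟫ = ⟪k₂ z², k₂ w²⟫`.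
As both kernel families span densely and squaring maps the disc onto itself, `k₂ (z²) ↦ k₀ z`
extends to a unitary `H² → H₀`, which realises `g ↦ g (z²)`; evenness follows from `(-z)² = z²`.

Since `f 0 = ⟪k₀ 0, f⟫`, the supremum of `‖f 0‖` over the unit ball of functions vanishing at
`a` and `b` is `‖u‖`, where `u = k₀ 0 - c₁ k₀ a - c₂ k₀ b` is chosen to vanish at `a` and `b`;
moreover `‖u‖² = ⟪k₀ 0, u⟫ = u 0`. Solving the `2 × 2` system gives `u 0 = a⁴ b⁴` when
`a² ≠ b²`, whereas for `b = ± a` the two constraints coincide and `u 0 = a⁴`. With `a = -r`,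
`b = t` this makes `γ₀` jump up to `r²` at `t = r`, so it is neither continuous nor monotone.
-/

theorem denseRange_linearCombination_of_topologicalClosure_span_eq_top
    {𝕜 E ι : Type*} [RCLike 𝕜] [NormedAddCommGroup E] [InnerProductSpace 𝕜 E] {v : ι → E}
    (hv : (Submodule.span 𝕜 (Set.range v)).topologicalClosure = ⊤) :
    DenseRange (Finsupp.linearCombination 𝕜 v) := by
  rwa [DenseRange, ← LinearMap.coe_range, Finsupp.range_linearCombination,
    Submodule.dense_iff_topologicalClosure_eq_top]

theorem exists_linearIsometryEquiv_apply_eq_of_inner_eq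
    {𝕜 E F ι : Type*} [RCLike 𝕜]
    [NormedAddCommGroup E] [InnerProductSpace 𝕜 E] [CompleteSpace E]
    [NormedAddCommGroup F] [InnerProductSpace 𝕜 F] [CompleteSpace F]
    (v : ι → E) (w : ι → F)
    (hv : (Submodule.span 𝕜 (Set.range v)).topologicalClosure = ⊤)
    (hw : (Submodule.span 𝕜 (Set.range w)).topologicalClosure = ⊤)
    (hvw : ∀ i j, ⟪v i, v j⟫_𝕜 = ⟪w i, w j⟫_𝕜) :
    ∃ U : E ≃ₗᵢ[𝕜] F, ∀ i, U (v i) = w i := by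
  set L := Finsupp.linearCombination 𝕜 v
  set M := Finsupp.linearCombination 𝕜 w
  have hL := denseRange_linearCombination_of_topologicalClosure_span_eq_top hv
  have hM := denseRange_linearCombination_of_topologicalClosure_span_eq_top hw
  have hnorm : ∀ c, ‖M c‖ = ‖L c‖ := by
    intro c
    have hinner : ⟪L c, L c⟫_𝕜 = ⟪M c, M c⟫_𝕜 := by
      simp only [L, M, Finsupp.linearCombination_apply, Finsupp.sum_inner, Finsupp.inner_sum,
        inner_smul_left, inner_smul_right, hvw]
    rw [@norm_eq_sqrt_re_inner 𝕜, @norm_eq_sqrt_re_inner 𝕜, hinner]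
  refine ⟨(LinearEquiv.refl 𝕜 (ι →₀ 𝕜)).extendOfIsometry L M hL hM hnorm, fun i => ?_⟩
  simpa [L, M] using LinearEquiv.extendOfIsometry_eq (LinearEquiv.refl 𝕜 (ι →₀ 𝕜)) L M hL hM
    hnorm (Finsupp.single i 1)

theorem isGreatest_norm_inner_of_inner_eq_zero {𝕜 E : Type*} [RCLike 𝕜]
    [NormedAddCommGroup E] [InnerProductSpace 𝕜 E] {x y₁ y₂ : E} (c₁ c₂ : 𝕜) {V : ℝ}
    (hV : 0 ≤ V) (h₁ : ⟪y₁, x - c₁ • y₁ - c₂ • y₂⟫_𝕜 = 0) (h₂ : ⟪y₂, x - c₁ • y₁ - c₂ • y₂⟫_𝕜 = 0)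
    (hx : ⟪x, x - c₁ • y₁ - c₂ • y₂⟫_𝕜 = (V ^ 2 : ℝ)) :
    IsGreatest {s : ℝ | ∃ f : E, ‖f‖ ≤ 1 ∧ ⟪y₁, f⟫_𝕜 = 0 ∧ ⟪y₂, f⟫_𝕜 = 0 ∧ s = ‖⟪x, f⟫_𝕜‖} V := by
  set u := x - c₁ • y₁ - c₂ • y₂
  have hxf : ∀ f : E, ⟪y₁, f⟫_𝕜 = 0 → ⟪y₂, f⟫_𝕜 = 0 → ⟪x, f⟫_𝕜 = ⟪u, f⟫_𝕜 := fun f hf₁ hf₂ => by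
    simp only [u, inner_sub_left, inner_smul_left, hf₁, hf₂, mul_zero, sub_zero]
  have hu : ‖u‖ = V := by
    have hsq : ‖u‖ ^ 2 = V ^ 2 := by
      rw [← inner_self_eq_norm_sq (𝕜 := 𝕜), ← hxf u h₁ h₂, hx, RCLike.ofReal_re]
    exact (pow_left_inj₀ (norm_nonneg u) hV two_ne_zero).mp hsq
  refine ⟨⟨((V⁻¹ : ℝ) : 𝕜) • u, ?_, ?_, ?_, ?_⟩, ?_⟩
  · rw [norm_smul, RCLike.norm_ofReal, abs_inv, abs_of_nonneg hV, hu]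
    exact inv_mul_le_one_of_le₀ le_rfl hV
  · rw [inner_smul_right, h₁, mul_zero]
  · rw [inner_smul_right, h₂, mul_zero]
  · have hV' : V⁻¹ * V ^ 2 = V := by
      rcases hV.eq_or_lt with rfl | hV
      · simp
      · field_simp
    rw [inner_smul_right, hx, ← RCLike.ofReal_mul, RCLike.norm_ofReal, hV',
      abs_of_nonneg hV]
  · rintro s ⟨f, hf, hf₁, hf₂, rfl⟩
    calc ‖⟪x, f⟫_𝕜‖ = ‖⟪u, f⟫_𝕜‖ := by rw [hxf f hf₁ hf₂]
      _ ≤ ‖u‖ * ‖f‖ := norm_inner_le_norm u f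
      _ ≤ V := by rw [hu]; exact mul_le_of_le_one_right hV hf

section ReproducingKernel

variable {H : Type*} [NormedAddCommGroup H] [InnerProductSpace ℂ H]

def twoPointExtremalSet (ev : H →ₗ[ℂ] ℂ → ℂ) (p a b : ℂ) : Set ℝ :=
  {x | ∃ f : H, ‖f‖ ≤ 1 ∧ ev f a = 0 ∧ ev f b = 0 ∧ x = ‖ev f p‖}

theorem isGreatest_twoPointExtremalSet {ev : H →ₗ[ℂ] ℂ → ℂ} {k : ℂ → H} {K : ℂ → ℂ → ℂ}
    (hrep : ∀ (f : H) (z : ℂ), ‖z‖ < 1 → ev f z = ⟪k z, f⟫_ℂ)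
    (hK : ∀ z w : ℂ, ‖z‖ < 1 → ‖w‖ < 1 → ev (k w) z = K z w)
    {p a b : ℂ} (hp : ‖p‖ < 1) (ha : ‖a‖ < 1) (hb : ‖b‖ < 1) (c₁ c₂ : ℂ) {V : ℝ} (hV : 0 ≤ V)
    (h₁ : K a p - c₁ * K a a - c₂ * K a b = 0) (h₂ : K b p - c₁ * K b a - c₂ * K b b = 0)
    (h₃ : K p p - c₁ * K p a - c₂ * K p b = (V ^ 2 : ℝ)) :
    IsGreatest (twoPointExtremalSet ev p a b) V := by
  have hu : ∀ z, ‖z‖ < 1 → ⟪k z, k p - c₁ • k a - c₂ • k b⟫_ℂ = K z p - c₁ * K z a - c₂ * K z b :=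
    fun z hz => by simp only [← hrep _ z hz, map_sub, map_smul, Pi.sub_apply, Pi.smul_apply,
      smul_eq_mul, hK z _ hz hp, hK z _ hz ha, hK z _ hz hb]
  have hset : twoPointExtremalSet ev p a b = {s : ℝ | ∃ f : H, ‖f‖ ≤ 1 ∧ ⟪k a, f⟫_ℂ = 0 ∧
      ⟪k b, f⟫_ℂ = 0 ∧ s = ‖⟪k p, f⟫_ℂ‖} := by
    simp only [twoPointExtremalSet, hrep _ _ hp, hrep _ _ ha, hrep _ _ hb]
  rw [hset]
  exact isGreatest_norm_inner_of_inner_eq_zero c₁ c₂ hV (by rw [hu a ha, h₁])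
    (by rw [hu b hb, h₂]) (by rw [hu p hp, h₃]; rfl)

theorem isGreatest_twoPointExtremalSet_of_sq_ne {ev : H →ₗ[ℂ] ℂ → ℂ} {k : ℂ → H}
    (hrep : ∀ (f : H) (z : ℂ), ‖z‖ < 1 → ev f z = ⟪k z, f⟫_ℂ)
    (hK : ∀ z w : ℂ, ‖z‖ < 1 → ‖w‖ < 1 → ev (k w) z = 1 / (1 - (z * (starRingEnd ℂ) w) ^ 2))
    {a b : ℝ} (ha : |a| < 1) (hb : |b| < 1) (hab : a ^ 2 ≠ b ^ 2) :
    IsGreatest (twoPointExtremalSet ev 0 a b) (a ^ 2 * b ^ 2) := by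
  have ha2 : a ^ 2 < 1 := sq_lt_one_iff_abs_lt_one a |>.mpr ha
  have hb2 : b ^ 2 < 1 := sq_lt_one_iff_abs_lt_one b |>.mpr hb
  have haa : 1 - a ^ 4 ≠ 0 := by nlinarith [sq_nonneg a]
  have hbb : 1 - b ^ 4 ≠ 0 := by nlinarith [sq_nonneg b]
  have hab' : 1 - a ^ 2 * b ^ 2 ≠ 0 := by nlinarith [sq_nonneg a, sq_nonneg b]
  have hba : 1 - b ^ 2 * a ^ 2 ≠ 0 := by rwa [mul_comm]
  have hd : a ^ 2 - b ^ 2 ≠ 0 := sub_ne_zero.mpr hab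
  have hd' : b ^ 2 - a ^ 2 ≠ 0 := sub_ne_zero.mpr hab.symm
  -- Cramer's rule for the two conditions that `k 0 - c₁ • k a - c₂ • k b` vanish at `a` and `b`.
  refine isGreatest_twoPointExtremalSet hrep hK (by simp) (by simpa using ha) (by simpa using hb)
    ((b ^ 2 * (1 - a ^ 4) * (1 - a ^ 2 * b ^ 2) / (b ^ 2 - a ^ 2) : ℝ))
    ((a ^ 2 * (1 - b ^ 4) * (1 - a ^ 2 * b ^ 2) / (a ^ 2 - b ^ 2) : ℝ)) (by positivity)
    ?_ ?_ ?_ <;>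
  · norm_num [mul_pow, ← pow_add]
    norm_cast
    field_simp
    ring

theorem isGreatest_twoPointExtremalSet_of_sq_eq {ev : H →ₗ[ℂ] ℂ → ℂ} {k : ℂ → H}
    (hrep : ∀ (f : H) (z : ℂ), ‖z‖ < 1 → ev f z = ⟪k z, f⟫_ℂ)
    (hK : ∀ z w : ℂ, ‖z‖ < 1 → ‖w‖ < 1 → ev (k w) z = 1 / (1 - (z * (starRingEnd ℂ) w) ^ 2))
    {a b : ℝ} (ha : |a| < 1) (hab : a ^ 2 = b ^ 2) :
    IsGreatest (twoPointExtremalSet ev 0 a b) (a ^ 2) := by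
  have hb : |b| < 1 := by rwa [← sq_lt_one_iff_abs_lt_one, ← hab, sq_lt_one_iff_abs_lt_one]
  have hba : (b : ℂ) ^ 2 = (a : ℂ) ^ 2 := by exact_mod_cast hab.symm
  have haa : (1 : ℂ) - (a : ℂ) ^ 4 ≠ 0 := by
    have : a ^ 4 < 1 := by nlinarith [sq_lt_one_iff_abs_lt_one a |>.mpr ha, sq_nonneg a]
    exact_mod_cast (sub_pos.mpr this).ne'
  refine isGreatest_twoPointExtremalSet hrep hK (by simp) (by simpa using ha) (by simpa using hb)
    ((1 - a ^ 4 : ℝ)) 0 (sq_nonneg a) ?_ ?_ ?_ <;>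
  simp [mul_pow, hba, ← pow_add, ← pow_mul, haa]

end ReproducingKernel

theorem image_pow_ball_zero_one {n : ℕ} (hn : n ≠ 0) :
    (· ^ n) '' Metric.ball (0 : ℂ) 1 = Metric.ball 0 1 := by
  ext w
  simp only [Set.mem_image, mem_ball_zero_iff]
  constructor
  · rintro ⟨z, hz, rfl⟩
    rw [norm_pow]
    exact pow_lt_one₀ (norm_nonneg z) hz hn
  · intro hw
    obtain ⟨z, rfl⟩ := IsAlgClosed.exists_pow_nat_eq w (Nat.pos_of_ne_zero hn)
    refine ⟨z, ?_, rfl⟩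
    rw [norm_pow] at hw
    exact (pow_lt_one_iff_of_nonneg (norm_nonneg z) hn).mp hw

theorem exists_linearIsometryEquiv_eval_sq
    {H2 H0 : Type*} [NormedAddCommGroup H2] [InnerProductSpace ℂ H2] [CompleteSpace H2]
    [NormedAddCommGroup H0] [InnerProductSpace ℂ H0] [CompleteSpace H0]
    {ev2 : H2 →ₗ[ℂ] (ℂ → ℂ)} {k2 : ℂ → H2}
    (hrep2 : ∀ (f : H2) (z : ℂ), ‖z‖ < 1 → ev2 f z = ⟪k2 z, f⟫_ℂ)
    (hK2 : ∀ z w : ℂ, ‖z‖ < 1 → ‖w‖ < 1 → ev2 (k2 w) z = 1 / (1 - z * (starRingEnd ℂ) w))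
    (hspan2 : (Submodule.span ℂ (k2 '' Metric.ball 0 1)).topologicalClosure = ⊤)
    {ev0 : H0 →ₗ[ℂ] (ℂ → ℂ)} {k0 : ℂ → H0}
    (hrep0 : ∀ (f : H0) (z : ℂ), ‖z‖ < 1 → ev0 f z = ⟪k0 z, f⟫_ℂ)
    (hK0 : ∀ z w : ℂ, ‖z‖ < 1 → ‖w‖ < 1 →
      ev0 (k0 w) z = 1 / (1 - (z * (starRingEnd ℂ) w) ^ 2))
    (hspan0 : (Submodule.span ℂ (k0 '' Metric.ball 0 1)).topologicalClosure = ⊤) :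
    ∃ U : H2 ≃ₗᵢ[ℂ] H0, ∀ (g : H2) (z : ℂ), ‖z‖ < 1 → ev0 (U g) z = ev2 g (z ^ 2) := by
  have hsq : ∀ z : ℂ, ‖z‖ < 1 → ‖z ^ 2‖ < 1 := fun z hz => by
    rw [norm_pow]; exact pow_lt_one₀ (norm_nonneg z) hz two_ne_zero
  have hrange2 : Set.range (fun z : Metric.ball (0 : ℂ) 1 => k2 ((z : ℂ) ^ 2)) =
      k2 '' Metric.ball 0 1 := by
    conv_rhs => rw [← image_pow_ball_zero_one two_ne_zero, Set.image_image]
    exact (Set.image_eq_range (fun z => k2 (z ^ 2)) _).symm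
  obtain ⟨U, hU⟩ := exists_linearIsometryEquiv_apply_eq_of_inner_eq
    (fun z : Metric.ball (0 : ℂ) 1 => k2 ((z : ℂ) ^ 2)) (fun z => k0 z)
    (by rwa [hrange2]) (by rwa [← Set.image_eq_range]) (by
      rintro ⟨z, hz⟩ ⟨w, hw⟩
      rw [mem_ball_zero_iff] at hz hw
      rw [← hrep2 _ _ (hsq z hz), hK2 _ _ (hsq z hz) (hsq w hw), ← hrep0 _ _ hz, hK0 _ _ hz hw,
        map_pow, mul_pow])
  refine ⟨U, fun g z hz => ?_⟩
  rw [hrep0 _ _ hz, hrep2 _ _ (hsq z hz), ← U.inner_map_map, ← hU ⟨z, mem_ball_zero_iff.mpr hz⟩]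

theorem not_continuousWithinAt_of_eq_ite {γ : ℝ → ℝ} {r : ℝ} (hr : r ∈ Set.Ioo (0 : ℝ) 1)
    (hγ : ∀ t ∈ Set.Ioo (0 : ℝ) 1, γ t = if t = r then r ^ 2 else r ^ 2 * t ^ 2) :
    ¬ ContinuousWithinAt γ (Set.Ioo 0 1) r := by
  intro hcont
  have hsub : Set.Ioo 0 r ⊆ Set.Ioo (0 : ℝ) 1 := Set.Ioo_subset_Ioo_right hr.2.le
  have hlim₁ : Tendsto γ (𝓝[Set.Ioo 0 r] r) (𝓝 (r ^ 2)) := by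
    simpa [hγ r hr] using (hcont.mono hsub).tendsto
  have hlim₂ : Tendsto γ (𝓝[Set.Ioo 0 r] r) (𝓝 (r ^ 2 * r ^ 2)) := by
    have hcont' : Continuous fun t : ℝ => r ^ 2 * t ^ 2 := by fun_prop
    refine (hcont'.tendsto r).mono_left nhdsWithin_le_nhds |>.congr' ?_
    filter_upwards [self_mem_nhdsWithin] with t ht
    rw [hγ t (hsub ht), if_neg ht.2.ne]
  have := right_nhdsWithin_Ioo_neBot hr.1
  have hr2 : r ^ 2 < 1 := pow_lt_one₀ hr.1.le hr.2 two_ne_zero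
  nlinarith [tendsto_nhds_unique hlim₁ hlim₂, pow_pos hr.1 2]

theorem not_monotoneOn_of_eq_ite {γ : ℝ → ℝ} {r : ℝ} (hr : r ∈ Set.Ioo (0 : ℝ) 1)
    (hγ : ∀ t ∈ Set.Ioo (0 : ℝ) 1, γ t = if t = r then r ^ 2 else r ^ 2 * t ^ 2) :
    ¬ MonotoneOn γ (Set.Ioo (0 : ℝ) 1) := by
  intro hmono
  obtain ⟨t, hrt, ht1⟩ := exists_between hr.2
  have ht : t ∈ Set.Ioo (0 : ℝ) 1 := ⟨hr.1.trans hrt, ht1⟩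
  have := hmono hr ht hrt.le
  rw [hγ r hr, hγ t ht, if_pos rfl, if_neg hrt.ne'] at this
  have ht2 : t ^ 2 < 1 := pow_lt_one₀ ht.1.le ht1 two_ne_zero
  nlinarith [pow_pos hr.1 2]

/-- In the RKHS H₀ on 𝔻 with kernel K₀(z,w) = 1/(1-(z w̄)²): every function is even,
g ↦ g(z²) is a unitary from H² (kernel 1/(1-z w̄)) onto H₀, and for r ∈ (0,1) the
two-point extremal value γ₀(t) at {-r, t} equals r²t² for t ≠ r and r² for t = r;
in particular γ₀ is discontinuous at t = r and not monotone increasing on (0,1). -/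
theorem stmt15
    {H2 H0 : Type*} [NormedAddCommGroup H2] [InnerProductSpace ℂ H2] [CompleteSpace H2]
    [NormedAddCommGroup H0] [InnerProductSpace ℂ H0] [CompleteSpace H0]
    (ev2 : H2 →ₗ[ℂ] (ℂ → ℂ)) (k2 : ℂ → H2)
    (hrep2 : ∀ (f : H2) (z : ℂ), ‖z‖ < 1 → ev2 f z = ⟪k2 z, f⟫_ℂ)
    (hK2 : ∀ z w : ℂ, ‖z‖ < 1 → ‖w‖ < 1 →
      ev2 (k2 w) z = 1 / (1 - z * (starRingEnd ℂ) w))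
    (hspan2 : (Submodule.span ℂ (k2 '' Metric.ball 0 1)).topologicalClosure = ⊤)
    (ev0 : H0 →ₗ[ℂ] (ℂ → ℂ)) (k0 : ℂ → H0)
    (hrep0 : ∀ (f : H0) (z : ℂ), ‖z‖ < 1 → ev0 f z = ⟪k0 z, f⟫_ℂ)
    (hK0 : ∀ z w : ℂ, ‖z‖ < 1 → ‖w‖ < 1 →
      ev0 (k0 w) z = 1 / (1 - (z * (starRingEnd ℂ) w) ^ 2))
    (hspan0 : (Submodule.span ℂ (k0 '' Metric.ball 0 1)).topologicalClosure = ⊤)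
    (r : ℝ) (hr : r ∈ Set.Ioo (0 : ℝ) 1)
    (γ : ℝ → ℝ)
    (hγ : ∀ t : ℝ, γ t = sSup {x : ℝ | ∃ f : H0, ‖f‖ ≤ 1 ∧
      ev0 f (-(r : ℂ)) = 0 ∧ ev0 f (t : ℂ) = 0 ∧ x = ‖ev0 f 0‖}) :
    (∀ (f : H0) (z : ℂ), ‖z‖ < 1 → ev0 f (-z) = ev0 f z) ∧
    (∃ U : H2 ≃ₗᵢ[ℂ] H0, ∀ (g : H2) (z : ℂ), ‖z‖ < 1 →
      ev0 (U g) z = ev2 g (z ^ 2)) ∧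
    (∀ t ∈ Set.Ioo (0 : ℝ) 1, γ t = if t = r then r ^ 2 else r ^ 2 * t ^ 2) ∧
    ¬ ContinuousWithinAt γ (Set.Ioo 0 1) r ∧
    ¬ MonotoneOn γ (Set.Ioo (0 : ℝ) 1) := by
  obtain ⟨U, hU⟩ := exists_linearIsometryEquiv_eval_sq hrep2 hK2 hspan2 hrep0 hK0 hspan0
  have heven : ∀ (f : H0) (z : ℂ), ‖z‖ < 1 → ev0 f (-z) = ev0 f z := fun f z hz => by
    rw [← U.apply_symm_apply f, hU _ _ (by rwa [norm_neg]), hU _ _ hz, neg_sq]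
  have hval : ∀ t ∈ Set.Ioo (0 : ℝ) 1, γ t = if t = r then r ^ 2 else r ^ 2 * t ^ 2 := by
    intro t ht
    have hr' : |-r| < 1 := by rw [abs_neg, abs_of_pos hr.1]; exact hr.2
    have ht' : |t| < 1 := by rw [abs_of_pos ht.1]; exact ht.2
    have hsq : (-r) ^ 2 = t ^ 2 ↔ t = r := by
      rw [neg_sq, sq_eq_sq₀ hr.1.le ht.1.le, eq_comm]
    rw [hγ t, ← Complex.ofReal_neg]
    refine IsGreatest.csSup_eq ?_
    rw [← neg_sq r]
    split_ifs with htr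
    · exact isGreatest_twoPointExtremalSet_of_sq_eq hrep0 hK0 hr' (hsq.mpr htr)
    · exact isGreatest_twoPointExtremalSet_of_sq_ne hrep0 hK0 hr' ht' (mt hsq.mp htr)
  exact ⟨heven, ⟨U, hU⟩, hval, not_continuousWithinAt_of_eq_ite hr hval,
    not_monotoneOn_of_eq_ite hr hval⟩
end

section
/- Let K_a(z,w) = 1/(1 - a·z·w̄ - (1-a)·(z·w̄)²) for a ∈ (0,1), fix r ∈ (0,1), and let γ_a(r) be the supremum of |f(0)| over unit-norm functions in the RKHS H_a vanishing at r and -r. Setting F(a) = 1 - (1-a)r⁴ and G(a) = a·r², one has K_a(r,r) = K_a(-r,-r) = 1/(F(a) - G(a)), K_a(r,-r) = 1/(F(a) + G(a)), and 1 - γ_a(r)² = (F(a)² - G(a)²)/F(a); in particular γ_a(r) → r² as a → 0⁺. -/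
/-!
On the functions vanishing at `±r`, evaluation at `0` is `⟪g, ·⟫`, where `g` is the component of
`k 0` orthogonal to `span {k r, k (-r)}`; so `γ = ‖g‖`. By the symmetry `r ↔ -r` this component is
`g = k 0 - c (k r + k (-r))` with `c = 1 / (K(r,r) + K(r,-r))`, and `‖g‖² = 1 - 2c`. Since
`K(r,±r) = 1 / (F ∓ G)`, this gives `1 - γ² = (F² - G²) / F`, which tends to `1 - r⁴` as `a → 0`.
-/

open scoped InnerProductSpace
open Set Filter Topology

section Extremal

variable {𝕜 E : Type*} [RCLike 𝕜] [NormedAddCommGroup E] [InnerProductSpace 𝕜 E]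

theorem sSup_norm_inner_of_mem_orthogonal {K : Submodule 𝕜 E} {e g : E} (hg : g ∈ Kᗮ)
    (heg : e - g ∈ K) :
    sSup {x : ℝ | ∃ f ∈ Kᗮ, ‖f‖ ≤ 1 ∧ x = ‖⟪e, f⟫_𝕜‖} = ‖g‖ := by
  have hinner : ∀ f ∈ Kᗮ, ⟪e, f⟫_𝕜 = ⟪g, f⟫_𝕜 := fun f hf => by
    rw [← sub_eq_zero, ← inner_sub_left]
    exact K.inner_right_of_mem_orthogonal heg hf
  have hg' : (‖g‖⁻¹ : 𝕜) • g ∈ Kᗮ := Kᗮ.smul_mem _ hg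
  refine IsGreatest.csSup_eq ⟨⟨_, hg', ?_, ?_⟩, ?_⟩
  · rw [norm_smul, norm_inv, RCLike.norm_ofReal, abs_norm]
    exact inv_mul_le_one_of_le₀ le_rfl (norm_nonneg g)
  · rw [hinner _ hg', inner_smul_right, inner_self_eq_norm_sq_to_K, norm_mul, norm_inv,
      norm_pow, RCLike.norm_ofReal, abs_norm]
    rcases eq_or_ne ‖g‖ 0 with h | h
    · simp [h]
    · field_simp
  · rintro x ⟨f, hf, hf1, rfl⟩
    rw [hinner f hf]
    exact (norm_inner_le_norm g f).trans (mul_le_of_le_one_right (norm_nonneg g) hf1)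

theorem sSup_norm_inner_orthogonal_pair_sq {e₀ e₁ e₂ : E} {p q : ℝ}
    (h00 : ⟪e₀, e₀⟫_𝕜 = 1) (h10 : ⟪e₁, e₀⟫_𝕜 = 1) (h20 : ⟪e₂, e₀⟫_𝕜 = 1)
    (h11 : ⟪e₁, e₁⟫_𝕜 = p) (h22 : ⟪e₂, e₂⟫_𝕜 = p) (h12 : ⟪e₁, e₂⟫_𝕜 = q) (hpq : p + q ≠ 0) :
    sSup {x : ℝ | ∃ f : E, ‖f‖ ≤ 1 ∧ ⟪e₁, f⟫_𝕜 = 0 ∧ ⟪e₂, f⟫_𝕜 = 0 ∧ x = ‖⟪e₀, f⟫_𝕜‖} ^ 2 =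
      1 - 2 / (p + q) := by
  have h21 : ⟪e₂, e₁⟫_𝕜 = q := by rw [← inner_conj_symm, h12, RCLike.conj_ofReal]
  have h01 : ⟪e₀, e₁⟫_𝕜 = 1 := by rw [← inner_conj_symm, h10, map_one]
  have h02 : ⟪e₀, e₂⟫_𝕜 = 1 := by rw [← inner_conj_symm, h20, map_one]
  set c : 𝕜 := (((p + q)⁻¹ : ℝ) : 𝕜)
  have hc : c * (p + q) = 1 := by
    simp only [c]; push_cast; exact inv_mul_cancel₀ (by exact_mod_cast hpq)
  set g : E := e₀ - c • (e₁ + e₂)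
  have hg₁ : ⟪e₁, g⟫_𝕜 = 0 := by
    rw [inner_sub_right, inner_smul_right, inner_add_right, h10, h11, h12, hc, sub_self]
  have hg₂ : ⟪e₂, g⟫_𝕜 = 0 := by
    rw [inner_sub_right, inner_smul_right, inner_add_right, h20, h21, h22, add_comm (q : 𝕜), hc,
      sub_self]
  have hgg : ⟪g, g⟫_𝕜 = ((1 - 2 / (p + q) : ℝ) : 𝕜) := by
    have hg₀ : ⟪e₀, g⟫_𝕜 = 1 - 2 * c := by
      rw [inner_sub_right, inner_smul_right, inner_add_right, h00, h01, h02]; ring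
    calc ⟪g, g⟫_𝕜 = ⟪e₀, g⟫_𝕜 - starRingEnd 𝕜 c * (⟪e₁, g⟫_𝕜 + ⟪e₂, g⟫_𝕜) := by
          rw [← inner_add_left, ← inner_smul_left, ← inner_sub_left]
      _ = ((1 - 2 / (p + q) : ℝ) : 𝕜) := by
          rw [hg₁, hg₂, hg₀]; simp only [c]; push_cast; ring
  set K : Submodule 𝕜 E := (𝕜 ∙ e₁) ⊔ (𝕜 ∙ e₂)
  have hK : ∀ f, f ∈ Kᗮ ↔ ⟪e₁, f⟫_𝕜 = 0 ∧ ⟪e₂, f⟫_𝕜 = 0 := fun f => by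
    rw [← Submodule.inf_orthogonal, Submodule.mem_inf,
      Submodule.mem_orthogonal_singleton_iff_inner_right,
      Submodule.mem_orthogonal_singleton_iff_inner_right]
  have hset : {x : ℝ | ∃ f : E, ‖f‖ ≤ 1 ∧ ⟪e₁, f⟫_𝕜 = 0 ∧ ⟪e₂, f⟫_𝕜 = 0 ∧ x = ‖⟪e₀, f⟫_𝕜‖} =
      {x : ℝ | ∃ f ∈ Kᗮ, ‖f‖ ≤ 1 ∧ x = ‖⟪e₀, f⟫_𝕜‖} := by
    ext x; exact exists_congr fun f => by rw [hK]; tauto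
  have hcK : e₀ - g ∈ K := by
    rw [sub_sub_cancel]
    exact K.smul_mem c (K.add_mem (Submodule.mem_sup_left (Submodule.mem_span_singleton_self e₁))
      (Submodule.mem_sup_right (Submodule.mem_span_singleton_self e₂)))
  rw [hset, sSup_norm_inner_of_mem_orthogonal ((hK g).2 ⟨hg₁, hg₂⟩) hcK,
    @norm_sq_eq_re_inner 𝕜, hgg, RCLike.ofReal_re]

end Extremal

theorem tendsto_of_one_sub_sq_eq {α : Type*} [TopologicalSpace α] {γ φ : α → ℝ} {s : Set α}
    {a₀ : α} (hγ : ∀ a ∈ s, 0 ≤ γ a) (h : ∀ a ∈ s, 1 - γ a ^ 2 = φ a)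
    (hφ : ContinuousWithinAt φ s a₀) : Tendsto γ (𝓝[s] a₀) (𝓝 √(1 - φ a₀)) := by
  refine ((continuousWithinAt_const.sub hφ).sqrt).tendsto.congr' ?_
  filter_upwards [self_mem_nhdsWithin] with a ha
  show √(1 - φ a) = γ a
  rw [← h a ha, sub_sub_cancel, Real.sqrt_sq (hγ a ha)]

noncomputable def quadraticKernel (a : ℝ) (z w : ℂ) : ℂ :=
  1 / (1 - (a : ℂ) * (z * (starRingEnd ℂ) w) - (1 - (a : ℂ)) * (z * (starRingEnd ℂ) w) ^ 2)

namespace quadraticKernel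

theorem zero_left (a : ℝ) (w : ℂ) : quadraticKernel a 0 w = 1 := by simp [quadraticKernel]

theorem zero_right (a : ℝ) (z : ℂ) : quadraticKernel a z 0 = 1 := by simp [quadraticKernel]

theorem neg_neg (a : ℝ) (z w : ℂ) : quadraticKernel a (-z) (-w) = quadraticKernel a z w := by
  simp [quadraticKernel]

theorem ofReal_self (a r : ℝ) :
    quadraticKernel a r r = (((1 - (1 - a) * r ^ 4) - a * r ^ 2 : ℝ) : ℂ)⁻¹ := by
  rw [quadraticKernel, Complex.conj_ofReal, one_div]; push_cast; ring

theorem ofReal_neg (a r : ℝ) :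
    quadraticKernel a r (-r) = (((1 - (1 - a) * r ^ 4) + a * r ^ 2 : ℝ) : ℂ)⁻¹ := by
  rw [quadraticKernel, map_neg, Complex.conj_ofReal, one_div]; push_cast; ring

theorem ofReal_denom_pos {a r : ℝ} (ha : a ∈ Ioo 0 1) (hr : r ∈ Ioo 0 1) :
    0 < (1 - (1 - a) * r ^ 4) - a * r ^ 2 ∧ 0 < (1 - (1 - a) * r ^ 4) + a * r ^ 2 := by
  obtain ⟨ha0, ha1⟩ := ha
  obtain ⟨hr0, hr1⟩ := hr
  have hr2 : r ^ 2 < 1 := pow_lt_one₀ hr0.le hr1 two_ne_zero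
  have hfactor : (1 - (1 - a) * r ^ 4) - a * r ^ 2 = (1 - r ^ 2) * (1 + (1 - a) * r ^ 2) := by ring
  constructor
  · rw [hfactor]; exact mul_pos (by linarith) (by nlinarith)
  · nlinarith [pow_lt_one₀ hr0.le hr1 four_ne_zero, mul_pos ha0 (pow_pos hr0 2)]

theorem one_sub_sSup_sq {E : Type*} [NormedAddCommGroup E] [InnerProductSpace ℂ E] {k : ℂ → E}
    {a r : ℝ} (ha : a ∈ Ioo 0 1) (hr : r ∈ Ioo 0 1)
    (hk : ∀ z w : ℂ, ‖z‖ < 1 → ‖w‖ < 1 → ⟪k z, k w⟫_ℂ = quadraticKernel a z w) :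
    1 - sSup {x : ℝ | ∃ f : E, ‖f‖ ≤ 1 ∧ ⟪k r, f⟫_ℂ = 0 ∧ ⟪k (-r), f⟫_ℂ = 0 ∧
      x = ‖⟪k 0, f⟫_ℂ‖} ^ 2 =
      ((1 - (1 - a) * r ^ 4) ^ 2 - (a * r ^ 2) ^ 2) / (1 - (1 - a) * r ^ 4) := by
  have hr₀ : ‖(r : ℂ)‖ < 1 := by simpa [abs_of_pos hr.1] using hr.2
  have hr₁ : ‖-(r : ℂ)‖ < 1 := by rwa [norm_neg]
  have h0 : ‖(0 : ℂ)‖ < 1 := by simp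
  obtain ⟨hsub, hadd⟩ := ofReal_denom_pos ha hr
  rw [sSup_norm_inner_orthogonal_pair_sq (p := (((1 - (1 - a) * r ^ 4) - a * r ^ 2))⁻¹)
      (q := (((1 - (1 - a) * r ^ 4) + a * r ^ 2))⁻¹)
    (by rw [hk 0 0 h0 h0, quadraticKernel.zero_left])
    (by rw [hk _ 0 hr₀ h0, quadraticKernel.zero_right])
    (by rw [hk _ 0 hr₁ h0, quadraticKernel.zero_right])
    (by rw [hk _ _ hr₀ hr₀, quadraticKernel.ofReal_self]; norm_cast)
    (by rw [hk _ _ hr₁ hr₁, quadraticKernel.neg_neg, quadraticKernel.ofReal_self]; norm_cast)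
    (by rw [hk _ _ hr₀ hr₁, quadraticKernel.ofReal_neg]; norm_cast)
    (by positivity)]
  have hF : 0 < 1 - (1 - a) * r ^ 4 := by linarith
  field_simp
  ring

end quadraticKernel

theorem stmt16_general {H : ℝ → Type*} [∀ a, NormedAddCommGroup (H a)]
    [∀ a, InnerProductSpace ℂ (H a)]
    (ev : ∀ a, H a →ₗ[ℂ] (ℂ → ℂ)) (k : ∀ a, ℂ → H a)
    (hrep : ∀ (a : ℝ) (f : H a) (z : ℂ), ‖z‖ < 1 → ev a f z = ⟪k a z, f⟫_ℂ)
    (hker : ∀ a ∈ Set.Ioo (0 : ℝ) 1, ∀ z w : ℂ, ‖z‖ < 1 → ‖w‖ < 1 →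
      ev a (k a w) z =
        1 / (1 - (a : ℂ) * (z * (starRingEnd ℂ) w) - (1 - (a : ℂ)) * (z * (starRingEnd ℂ) w) ^ 2))
    (r : ℝ) (hr : r ∈ Set.Ioo (0 : ℝ) 1)
    (γ : ℝ → ℝ)
    (hγ : ∀ a : ℝ, γ a = sSup {x : ℝ | ∃ f : H a, ‖f‖ ≤ 1 ∧
      ev a f (r : ℂ) = 0 ∧ ev a f (-(r : ℂ)) = 0 ∧ x = ‖ev a f 0‖}) :
    (∀ a ∈ Set.Ioo (0 : ℝ) 1,
      ev a (k a (r : ℂ)) (r : ℂ) = (((1 - (1 - a) * r ^ 4) - a * r ^ 2 : ℝ) : ℂ)⁻¹ ∧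
      ev a (k a (-(r : ℂ))) (-(r : ℂ)) = (((1 - (1 - a) * r ^ 4) - a * r ^ 2 : ℝ) : ℂ)⁻¹ ∧
      ev a (k a (-(r : ℂ))) (r : ℂ) = (((1 - (1 - a) * r ^ 4) + a * r ^ 2 : ℝ) : ℂ)⁻¹ ∧
      1 - γ a ^ 2 =
        ((1 - (1 - a) * r ^ 4) ^ 2 - (a * r ^ 2) ^ 2) / (1 - (1 - a) * r ^ 4)) ∧
    Filter.Tendsto γ (nhdsWithin 0 (Set.Ioo 0 1)) (nhds (r ^ 2)) := by
  have hr₀ : ‖(r : ℂ)‖ < 1 := by simpa [abs_of_pos hr.1] using hr.2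
  have hr₁ : ‖-(r : ℂ)‖ < 1 := by rwa [norm_neg]
  have h0 : ‖(0 : ℂ)‖ < 1 := by simp
  have hγ' : ∀ a, γ a = sSup {x : ℝ | ∃ f : H a, ‖f‖ ≤ 1 ∧ ⟪k a r, f⟫_ℂ = 0 ∧
      ⟪k a (-r), f⟫_ℂ = 0 ∧ x = ‖⟪k a 0, f⟫_ℂ‖} := fun a => by
    simp only [hγ a, hrep a _ _ hr₀, hrep a _ _ hr₁, hrep a _ _ h0]
  have hgap : ∀ a ∈ Ioo (0 : ℝ) 1, 1 - γ a ^ 2 =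
      ((1 - (1 - a) * r ^ 4) ^ 2 - (a * r ^ 2) ^ 2) / (1 - (1 - a) * r ^ 4) := fun a ha => by
    rw [hγ' a]
    exact quadraticKernel.one_sub_sSup_sq ha hr fun z w hz hw =>
      (hrep a _ z hz).symm.trans (hker a ha z w hz hw)
  refine ⟨fun a ha => ⟨?_, ?_, ?_, hgap a ha⟩, ?_⟩
  · exact (hker a ha _ _ hr₀ hr₀).trans (quadraticKernel.ofReal_self a r)
  · exact (hker a ha _ _ hr₁ hr₁).trans
      ((quadraticKernel.neg_neg a _ _).trans (quadraticKernel.ofReal_self a r))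
  · exact (hker a ha _ _ hr₀ hr₁).trans (quadraticKernel.ofReal_neg a r)
  · have hγ₀ : ∀ a, 0 ≤ γ a := fun a => (hγ a).symm ▸
      Real.sSup_nonneg fun x ⟨f, _, _, _, hx⟩ => hx ▸ norm_nonneg _
    have hr4 : (1 : ℝ) - r ^ 4 ≠ 0 := (sub_pos.2 (pow_lt_one₀ hr.1.le hr.2 four_ne_zero)).ne'
    have hφ : ContinuousAt (fun a : ℝ =>
        ((1 - (1 - a) * r ^ 4) ^ 2 - (a * r ^ 2) ^ 2) / (1 - (1 - a) * r ^ 4)) 0 := by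
      fun_prop (disch := simpa using hr4)
    convert tendsto_of_one_sub_sq_eq (fun a _ => hγ₀ a) hgap hφ.continuousWithinAt using 2
    rw [eq_comm, Real.sqrt_eq_iff_mul_self_eq_of_pos (pow_pos hr.1 2)]
    norm_num
    field_simp
    ring

/-- For the RKHS H_a on 𝔻 with kernel K_a(z,w) = 1/(1 - a z w̄ - (1-a)(z w̄)²), fixing
r ∈ (0,1) and letting γ_a(r) be the extremal value for vanishing at ±r, with
F(a) = 1-(1-a)r⁴ and G(a) = a r²: the kernel values are 1/(F∓G) as indicated,
1 - γ_a(r)² = (F(a)² - G(a)²)/F(a), and γ_a(r) → r² as a → 0⁺. -/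
theorem stmt16 {H : ℝ → Type*} [∀ a, NormedAddCommGroup (H a)]
    [∀ a, InnerProductSpace ℂ (H a)] [∀ a, CompleteSpace (H a)]
    (ev : ∀ a, H a →ₗ[ℂ] (ℂ → ℂ)) (k : ∀ a, ℂ → H a)
    (hrep : ∀ (a : ℝ) (f : H a) (z : ℂ), ‖z‖ < 1 → ev a f z = ⟪k a z, f⟫_ℂ)
    (hker : ∀ a ∈ Set.Ioo (0 : ℝ) 1, ∀ z w : ℂ, ‖z‖ < 1 → ‖w‖ < 1 →
      ev a (k a w) z =
        1 / (1 - (a : ℂ) * (z * (starRingEnd ℂ) w) - (1 - (a : ℂ)) * (z * (starRingEnd ℂ) w) ^ 2))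
    (hspan : ∀ a : ℝ, (Submodule.span ℂ (k a '' Metric.ball 0 1)).topologicalClosure = ⊤)
    (r : ℝ) (hr : r ∈ Set.Ioo (0 : ℝ) 1)
    (γ : ℝ → ℝ)
    (hγ : ∀ a : ℝ, γ a = sSup {x : ℝ | ∃ f : H a, ‖f‖ ≤ 1 ∧
      ev a f (r : ℂ) = 0 ∧ ev a f (-(r : ℂ)) = 0 ∧ x = ‖ev a f 0‖}) :
    (∀ a ∈ Set.Ioo (0 : ℝ) 1,
      ev a (k a (r : ℂ)) (r : ℂ) = (((1 - (1 - a) * r ^ 4) - a * r ^ 2 : ℝ) : ℂ)⁻¹ ∧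
      ev a (k a (-(r : ℂ))) (-(r : ℂ)) = (((1 - (1 - a) * r ^ 4) - a * r ^ 2 : ℝ) : ℂ)⁻¹ ∧
      ev a (k a (-(r : ℂ))) (r : ℂ) = (((1 - (1 - a) * r ^ 4) + a * r ^ 2 : ℝ) : ℂ)⁻¹ ∧
      1 - γ a ^ 2 =
        ((1 - (1 - a) * r ^ 4) ^ 2 - (a * r ^ 2) ^ 2) / (1 - (1 - a) * r ^ 4)) ∧
    Filter.Tendsto γ (nhdsWithin 0 (Set.Ioo 0 1)) (nhds (r ^ 2)) :=
  stmt16_general ev k hrep hker r hr γ hγ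
end
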